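/- arXiv:2306.12617 — 6 statements merged into one kernel-verified Lean document; each statement's English description precedes it below -/
import Mathlib

section
/- For every integer n ≥ 2, the matrices W and S₀ are invertible, and the trace of Q = W⁻¹ S₀⁻¹ D₁ equals −(n−1)². -/
open Matrix

/-- Truncated conversion operator from Chebyshev `T` coefficients to
ultraspherical `C^(1)` coefficients. -/
noncomputable def S0 (n : ℕ) : Matrix (Fin n) (Fin n) ℝ :=
  Matrix.of fun i j =>
    if (j : ℕ) = (i : ℕ) then (if (i : ℕ) = 0 then 1 else 1 / 2)
    else if (j : ℕ) = (i : ℕ) + 2 then -(1 / 2) else 0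

/-- Truncated first-order ultraspherical differentiation operator. -/
noncomputable def D1 (n : ℕ) : Matrix (Fin n) (Fin n) ℝ :=
  Matrix.of fun i j => if (j : ℕ) = (i : ℕ) + 1 then ((i : ℕ) : ℝ) + 1 else 0

/-- Boundary-condition matrix: first `n-1` rows of the identity, last row all ones. -/
noncomputable def W (n : ℕ) : Matrix (Fin n) (Fin n) ℝ :=
  Matrix.of fun i j => if (i : ℕ) = n - 1 then 1 else if i = j then 1 else 0

/-- Entries of the explicit inverse of `S0`, as a function of natural indices. -/
noncomputable def minvf (i j : ℕ) : ℝ :=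
  if i ≤ j ∧ (j - i) % 2 = 0 then (if i = 0 then 1 else 2) else 0

/-- Explicit inverse of `S0`. -/
noncomputable def Minv (n : ℕ) : Matrix (Fin n) (Fin n) ℝ :=
  Matrix.of fun i j => minvf i j

/-- Explicit inverse of `W`. -/
noncomputable def Winv (n : ℕ) : Matrix (Fin n) (Fin n) ℝ :=
  Matrix.of fun i j =>
    if (i : ℕ) = n - 1 then (if (j : ℕ) = n - 1 then 1 else -1)
    else if (i : ℕ) = (j : ℕ) then 1 else 0

lemma sum_coe_ite (n c : ℕ) (x : ℝ) (h : c < n) :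
    ∑ k : Fin n, (if (k : ℕ) = c then x else 0) = x := by
  have hk : ∀ k : Fin n, (if (k : ℕ) = c then x else 0)
      = if k = (⟨c, h⟩ : Fin n) then x else 0 := by
    intro k; simp [Fin.ext_iff]
  simp only [hk]
  simp

lemma sum_coe_ite_zero (n c : ℕ) (x : ℝ) (h : n ≤ c) :
    ∑ k : Fin n, (if (k : ℕ) = c then x else 0) = 0 := by
  apply Finset.sum_eq_zero
  intro k _
  rw [if_neg]
  have := k.isLt
  omega

lemma minvf_eq_zero_of_gt {i j : ℕ} (h : j < i) : minvf i j = 0 := by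
  unfold minvf
  rw [if_neg]
  omega

lemma natid (i j : ℕ) :
    (if i = 0 then (1 : ℝ) else 1 / 2) * minvf i j + -(1 / 2) * minvf (i + 2) j
      = if j = i then 1 else 0 := by
  unfold minvf
  split_ifs <;> first | contradiction | (exfalso; omega) | norm_num

lemma S0_mul_Minv (n : ℕ) : S0 n * Minv n = 1 := by
  ext i j
  rw [Matrix.mul_apply]
  have hsplit : ∀ k : Fin n, S0 n i k * Minv n k j =
      (if k = i then (if (i : ℕ) = 0 then (1 : ℝ) else 1 / 2) * minvf i j else 0)
      + (if (k : ℕ) = (i : ℕ) + 2 then -(1 / 2) * minvf ((i : ℕ) + 2) j else 0) := by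
    intro k
    show (if (k : ℕ) = (i : ℕ) then (if (i : ℕ) = 0 then (1:ℝ) else 1 / 2)
        else if (k : ℕ) = (i : ℕ) + 2 then -(1 / 2) else 0) * minvf k j = _
    by_cases h1 : (k : ℕ) = (i : ℕ)
    · have hk : k = i := Fin.ext h1
      subst hk
      simp
    · rw [if_neg h1, if_neg (fun h => h1 (Fin.ext_iff.mp h))]
      by_cases h2 : (k : ℕ) = (i : ℕ) + 2
      · rw [if_pos h2, if_pos h2, h2]
        ring
      · simp [h2]
  rw [Finset.sum_congr rfl (fun k _ => hsplit k), Finset.sum_add_distrib]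
  have h1 : ∑ k : Fin n, (if k = i then (if (i : ℕ) = 0 then (1 : ℝ) else 1 / 2) * minvf i j else 0)
      = (if (i : ℕ) = 0 then (1 : ℝ) else 1 / 2) * minvf i j := by
    rw [Finset.sum_ite_eq' Finset.univ i]
    simp
  have h2 : ∑ k : Fin n, (if (k : ℕ) = (i : ℕ) + 2 then -(1 / 2) * minvf ((i : ℕ) + 2) j else 0)
      = -(1 / 2) * minvf ((i : ℕ) + 2) j := by
    by_cases hc : (i : ℕ) + 2 < n
    · exact sum_coe_ite n _ _ hc
    · rw [sum_coe_ite_zero n _ _ (by omega)]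
      have hz : minvf ((i : ℕ) + 2) j = 0 := minvf_eq_zero_of_gt (by have := j.isLt; omega)
      rw [hz]; ring
  rw [h1, h2, natid]
  simp [Matrix.one_apply, Fin.ext_iff, eq_comm]

lemma W_mul_Winv (n : ℕ) (hn : 2 ≤ n) : W n * Winv n = 1 := by
  have hlt : n - 1 < n := by omega
  ext i j
  rw [Matrix.mul_apply]
  by_cases hi : (i : ℕ) = n - 1
  · have hW : ∀ k : Fin n, W n i k = 1 := by
      intro k
      show (if (i : ℕ) = n - 1 then (1:ℝ) else if i = k then 1 else 0) = 1
      rw [if_pos hi]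
    simp only [hW, one_mul]
    have hsum : ∑ k : Fin n, Winv n k j =
        ∑ k : Fin n, ((if (k : ℕ) = n - 1 then (if (j : ℕ) = n - 1 then (1:ℝ) else -1) else 0)
          + (if (k : ℕ) ≠ n - 1 ∧ (k : ℕ) = (j : ℕ) then 1 else 0)) := by
      apply Finset.sum_congr rfl
      intro k _
      show (if (k : ℕ) = n - 1 then (if (j : ℕ) = n - 1 then (1:ℝ) else -1)
          else if (k : ℕ) = (j : ℕ) then 1 else 0) = _
      by_cases hk : (k : ℕ) = n - 1
      · simp [hk]
      · simp [hk]
    rw [hsum, Finset.sum_add_distrib]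
    rw [sum_coe_ite n (n-1) _ hlt]
    by_cases hj : (j : ℕ) = n - 1
    · have hz : ∀ k : Fin n, (if (k : ℕ) ≠ n - 1 ∧ (k : ℕ) = (j : ℕ) then (1:ℝ) else 0) = 0 := by
        intro k
        rw [if_neg]
        rintro ⟨h1, h2⟩
        exact h1 (h2.trans hj)
      simp only [hz, Finset.sum_const_zero, add_zero, if_pos hj]
      have hij : i = j := Fin.ext (by omega)
      simp [hij, Matrix.one_apply]
    · have heq : ∀ k : Fin n, (if (k : ℕ) ≠ n - 1 ∧ (k : ℕ) = (j : ℕ) then (1:ℝ) else 0)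
          = (if (k : ℕ) = (j : ℕ) then 1 else 0) := by
        intro k
        by_cases hk : (k : ℕ) = (j : ℕ)
        · rw [if_pos ⟨fun h => hj (hk ▸ h), hk⟩, if_pos hk]
        · rw [if_neg (fun h => hk h.2), if_neg hk]
      rw [Finset.sum_congr rfl (fun k _ => heq k)]
      rw [sum_coe_ite n (j : ℕ) _ j.isLt, if_neg hj]
      have hij : i ≠ j := fun h => hj (h ▸ hi)
      simp [Matrix.one_apply, hij]
  · have hW : ∀ k : Fin n, W n i k = if i = k then 1 else 0 := by
      intro k
      show (if (i : ℕ) = n - 1 then (1:ℝ) else if i = k then 1 else 0) = _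
      rw [if_neg hi]
    simp only [hW, ite_mul, one_mul, zero_mul]
    rw [Finset.sum_ite_eq Finset.univ i (fun k => Winv n k j)]
    simp only [Finset.mem_univ, if_true]
    show (if (i : ℕ) = n - 1 then (if (j : ℕ) = n - 1 then (1:ℝ) else -1)
        else if (i : ℕ) = (j : ℕ) then 1 else 0) = _
    rw [if_neg hi]
    simp [Matrix.one_apply, Fin.ext_iff]

lemma colsum (c : ℕ) : ∑ j ∈ Finset.range (c + 1), minvf j c = (c : ℝ) + 1 := by
  induction c using Nat.twoStepInduction with
  | zero => simp [minvf]
  | one =>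
      rw [Finset.sum_range_succ, Finset.sum_range_succ, Finset.sum_range_zero]
      norm_num [minvf]
  | more c ih _ =>
      rw [Finset.sum_range_succ, Finset.sum_range_succ]
      have h1 : minvf (c + 1) (c + 2) = 0 := by
        unfold minvf; rw [if_neg]; omega
      have h2 : minvf (c + 2) (c + 2) = 2 := by
        unfold minvf
        rw [if_pos ⟨le_refl _, by omega⟩, if_neg (by omega)]
      have h3 : ∑ j ∈ Finset.range (c + 1), minvf j (c + 2)
          = ∑ j ∈ Finset.range (c + 1), minvf j c := by
        apply Finset.sum_congr rfl
        intro j hj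
        have hj' : j ≤ c := by have := Finset.mem_range.mp hj; omega
        unfold minvf
        rw [if_congr (by omega : (j ≤ c + 2 ∧ (c + 2 - j) % 2 = 0) ↔ (j ≤ c ∧ (c - j) % 2 = 0))
          rfl rfl]
      rw [h1, h2, h3, ih]
      push_cast
      ring

lemma colsum' (n c : ℕ) (h : c < n) :
    ∑ j ∈ Finset.range n, minvf j c = (c : ℝ) + 1 := by
  rw [← colsum c]
  symm
  apply Finset.sum_subset (Finset.range_subset_range.mpr (by omega))
  intro x _ hx
  exact minvf_eq_zero_of_gt (by simp at hx ⊢; omega)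

/-- For every `n ≥ 2`, `W` and `S₀` are invertible and the trace of
`Q = W⁻¹ S₀⁻¹ D₁` equals `-(n-1)²`. -/
theorem stmt1 (n : ℕ) (hn : 2 ≤ n) :
    IsUnit (W n) ∧ IsUnit (S0 n) ∧
      Matrix.trace ((W n)⁻¹ * (S0 n)⁻¹ * D1 n) = -(((n : ℝ) - 1) ^ 2) := by
  have hS := S0_mul_Minv n
  have hWi := W_mul_Winv n hn
  have hUS : IsUnit (S0 n) := by
    rw [Matrix.isUnit_iff_isUnit_det]
    exact IsUnit.of_mul_eq_one _ (by rw [← Matrix.det_mul, hS, Matrix.det_one])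
  have hUW : IsUnit (W n) := by
    rw [Matrix.isUnit_iff_isUnit_det]
    exact IsUnit.of_mul_eq_one _ (by rw [← Matrix.det_mul, hWi, Matrix.det_one])
  refine ⟨hUW, hUS, ?_⟩
  rw [Matrix.inv_eq_right_inv hS, Matrix.inv_eq_right_inv hWi, mul_assoc]
  -- entries of C = Minv * D1
  have hC : ∀ j k : Fin n, (Minv n * D1 n) j k
      = if (k : ℕ) = 0 then 0 else minvf (j : ℕ) ((k : ℕ) - 1) * ((k : ℕ) : ℝ) := by
    intro j k
    rw [Matrix.mul_apply]
    by_cases hk : (k : ℕ) = 0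
    · rw [if_pos hk]
      apply Finset.sum_eq_zero
      intro m _
      show minvf (j : ℕ) (m : ℕ) * (if (k : ℕ) = (m : ℕ) + 1 then ((m : ℕ) : ℝ) + 1 else 0) = 0
      rw [if_neg (by omega)]
      ring
    · rw [if_neg hk]
      have hm : (k : ℕ) - 1 < n := by have := k.isLt; omega
      have hptw : ∀ m : Fin n, Minv n j m * D1 n m k
          = if m = (⟨(k : ℕ) - 1, hm⟩ : Fin n) then minvf (j : ℕ) ((k : ℕ) - 1) * ((k : ℕ) : ℝ)
            else 0 := by
        intro m
        show minvf (j : ℕ) (m : ℕ) * (if (k : ℕ) = (m : ℕ) + 1 then ((m : ℕ) : ℝ) + 1 else 0) = _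
        by_cases h2 : (m : ℕ) = (k : ℕ) - 1
        · rw [if_pos (by omega), if_pos (Fin.ext h2), h2]
          have e : ((k : ℕ) - 1) + 1 = (k : ℕ) := by omega
          have ecast : ((((k : ℕ) - 1 : ℕ)) : ℝ) + 1 = (((k : ℕ)) : ℝ) := by
            exact_mod_cast congrArg (fun t : ℕ => (t : ℝ)) e
          rw [ecast]
        · rw [if_neg (by omega), if_neg (fun h => h2 (by simpa using congrArg Fin.val h))]
          ring
      rw [Finset.sum_congr rfl (fun m _ => hptw m), Finset.sum_ite_eq' Finset.univ]
      simp
  have hlt : n - 1 < n := by omega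
  set last : Fin n := ⟨n - 1, hlt⟩ with hlastdef
  -- diagonal entries
  have hdiag : ∀ i : Fin n, (Winv n * (Minv n * D1 n)) i i
      = if i = last then -(((n - 2 : ℕ) : ℝ) + 1) * (((n - 1 : ℕ)) : ℝ) else 0 := by
    intro i
    rw [Matrix.mul_apply]
    by_cases hi : (i : ℕ) = n - 1
    · have hil : i = last := Fin.ext hi
      rw [if_pos hil]
      have hWv : ∀ j : Fin n, Winv n i j = if (j : ℕ) = n - 1 then (1:ℝ) else -1 := by
        intro j
        show (if (i : ℕ) = n - 1 then (if (j : ℕ) = n - 1 then (1:ℝ) else -1)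
            else if (i : ℕ) = (j : ℕ) then 1 else 0) = _
        rw [if_pos hi]
      have hCi : ∀ j : Fin n, (Minv n * D1 n) j i
          = minvf (j : ℕ) (n - 2) * (((n - 1 : ℕ)) : ℝ) := by
        intro j
        rw [hC j i, if_neg (by omega), hi, Nat.sub_sub]
      have hptw : ∀ j : Fin n, Winv n i j * (Minv n * D1 n) j i
          = -(minvf (j : ℕ) (n - 2) * (((n - 1 : ℕ)) : ℝ)) := by
        intro j
        rw [hWv j, hCi j]
        by_cases hj : (j : ℕ) = n - 1
        · rw [if_pos hj, hj, minvf_eq_zero_of_gt (by omega)]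
          ring
        · rw [if_neg hj]
          ring
      rw [Finset.sum_congr rfl (fun j _ => hptw j), Finset.sum_neg_distrib,
        ← Finset.sum_mul]
      rw [Fin.sum_univ_eq_sum_range (fun j => minvf j (n - 2)) n]
      rw [colsum' n (n - 2) (by omega)]
      ring
    · have hil : i ≠ last := fun h => hi (by rw [h])
      rw [if_neg hil]
      have hWv : ∀ j : Fin n, Winv n i j = if (i : ℕ) = (j : ℕ) then (1:ℝ) else 0 := by
        intro j
        show (if (i : ℕ) = n - 1 then (if (j : ℕ) = n - 1 then (1:ℝ) else -1)
            else if (i : ℕ) = (j : ℕ) then 1 else 0) = _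
        rw [if_neg hi]
      have hptw : ∀ j : Fin n, Winv n i j * (Minv n * D1 n) j i
          = if j = i then (Minv n * D1 n) i i else 0 := by
        intro j
        rw [hWv j]
        by_cases hj : (i : ℕ) = (j : ℕ)
        · have : j = i := Fin.ext hj.symm
          rw [if_pos hj, if_pos this, this, one_mul]
        · rw [if_neg hj, if_neg (fun h => hj (by simpa using (congrArg Fin.val h).symm)), zero_mul]
      rw [Finset.sum_congr rfl (fun j _ => hptw j), Finset.sum_ite_eq' Finset.univ]
      simp only [Finset.mem_univ, if_true]
      rw [hC i i]
      by_cases h0 : (i : ℕ) = 0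
      · rw [if_pos h0]
      · rw [if_neg h0, minvf_eq_zero_of_gt (by omega), zero_mul]
  rw [Matrix.trace]
  simp only [Matrix.diag_apply]
  rw [Finset.sum_congr rfl (fun i _ => hdiag i), Finset.sum_ite_eq' Finset.univ]
  simp only [Finset.mem_univ, if_true]
  have c1 : ((n - 2 : ℕ) : ℝ) = (n : ℝ) - 2 := by
    push_cast [Nat.cast_sub (by omega : 2 ≤ n)]
    ring
  have c2 : ((n - 1 : ℕ) : ℝ) = (n : ℝ) - 1 := by
    push_cast [Nat.cast_sub (by omega : 1 ≤ n)]
    ring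
  rw [c1, c2]
  ring
end

section
/- For every integer n ≥ 2, with Q = W⁻¹ S₀⁻¹ D₁, the sum of all 2×2 principal minors of Q, i.e. E₂(Q) = Σ_{1 ≤ i < j ≤ n} (Q_{ii} Q_{jj} − Q_{ij} Q_{ji}), equals (n−1)²((n−1)² − 1)/3. -/
open Matrix

noncomputable def Me (n : ℕ) : Matrix (Fin n) (Fin n) ℝ :=
  Matrix.of fun i k =>
    if (i : ℕ) < (k : ℕ) ∧ (k : ℕ) % 2 ≠ (i : ℕ) % 2 then
      (if (i : ℕ) = 0 then ((k : ℕ) : ℝ) else 2 * ((k : ℕ) : ℝ)) else 0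

noncomputable def Qe (n : ℕ) : Matrix (Fin n) (Fin n) ℝ :=
  Matrix.of fun i k =>
    if (i : ℕ) = n - 1 then -(((k : ℕ) : ℝ)) ^ 2 else Me n i k

lemma sum_delta {n : ℕ} (m : ℕ) (f : Fin n → ℝ) :
    (∑ j : Fin n, if (j : ℕ) = m then f j else 0) = if h : m < n then f ⟨m, h⟩ else 0 := by
  split_ifs with h
  · rw [Finset.sum_eq_single ⟨m, h⟩] <;> simp +contextual [Fin.ext_iff]
  · apply Finset.sum_eq_zero; intro j _
    rw [if_neg]; intro hj; exact h (hj ▸ j.isLt)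

lemma G_eq (k : ℕ) :
    (∑ j ∈ Finset.range k, if k % 2 = j % 2 then (0 : ℝ) else if j = 0 then 1 else 2)
      = k := by
  induction k using Nat.twoStepInduction with
  | zero => simp
  | one => simp
  | more m ih _ =>
    rw [Finset.sum_range_succ, Finset.sum_range_succ]
    simp only [Nat.add_mod_right]
    rw [ih]
    have h1 : ¬ (m % 2 = (m + 1) % 2) := by omega
    norm_num [h1]

lemma H_eq (m : ℕ) :
    (∑ i ∈ Finset.range m, if m % 2 = i % 2 then (0 : ℝ) else (i : ℝ) ^ 2)
      = ((m : ℝ) ^ 3 - m) / 6 := by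
  induction m using Nat.twoStepInduction with
  | zero => simp
  | one => simp
  | more m ih _ =>
    rw [Finset.sum_range_succ, Finset.sum_range_succ]
    simp only [Nat.add_mod_right]
    rw [ih]
    have h1 : ¬ (m % 2 = (m + 1) % 2) := by omega
    norm_num [h1]
    ring

lemma sum_Me {n : ℕ} (k : Fin n) : (∑ j : Fin n, Me n j k) = ((k : ℕ) : ℝ) ^ 2 := by
  have h0 : (∑ j : Fin n, Me n j k)
      = ∑ j ∈ Finset.range n,
          (if j < (k : ℕ) ∧ (k : ℕ) % 2 ≠ j % 2 then
            (if j = 0 then ((k : ℕ) : ℝ) else 2 * ((k : ℕ) : ℝ)) else 0) := by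
    simp only [Me, Matrix.of_apply]
    exact Fin.sum_univ_eq_sum_range (fun j => if j < (k : ℕ) ∧ (k : ℕ) % 2 ≠ j % 2 then
            (if j = 0 then ((k : ℕ) : ℝ) else 2 * ((k : ℕ) : ℝ)) else 0) n
  rw [h0]
  rw [← Finset.sum_subset (Finset.range_subset_range.2 (le_of_lt k.isLt))
    (by intro x _ hx; rw [if_neg]; simp only [Finset.mem_range] at hx; omega)]
  have h1 : ∀ j ∈ Finset.range (k : ℕ),
      (if j < (k : ℕ) ∧ (k : ℕ) % 2 ≠ j % 2 then
        (if j = 0 then ((k : ℕ) : ℝ) else 2 * ((k : ℕ) : ℝ)) else 0)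
      = ((k : ℕ) : ℝ) * (if (k : ℕ) % 2 = j % 2 then (0:ℝ) else if j = 0 then 1 else 2) := by
    intro j hj
    simp only [Finset.mem_range] at hj
    split_ifs <;> first | ring1 | (exfalso; omega)
  rw [Finset.sum_congr rfl h1, ← Finset.mul_sum, G_eq]
  ring

lemma mulS0Me (n : ℕ) : S0 n * Me n = D1 n := by
  ext i k
  rw [Matrix.mul_apply]
  have hS : ∀ j : Fin n, S0 n i j
      = (if (j : ℕ) = (i : ℕ) then (if (i : ℕ) = 0 then (1:ℝ) else 1 / 2) else 0)
        + (if (j : ℕ) = (i : ℕ) + 2 then -(1 / 2) else 0) := by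
    intro j
    simp only [S0, Matrix.of_apply]
    split_ifs <;> first | ring1 | (exfalso; omega)
  calc (∑ j : Fin n, S0 n i j * Me n j k)
      = (∑ j : Fin n, if (j : ℕ) = (i : ℕ) then
          (if (i : ℕ) = 0 then (1:ℝ) else 1 / 2) * Me n j k else 0)
        + (∑ j : Fin n, if (j : ℕ) = (i : ℕ) + 2 then -(1 / 2) * Me n j k else 0) := by
        rw [← Finset.sum_add_distrib]
        apply Finset.sum_congr rfl
        intro j _
        rw [hS j]
        split_ifs <;> ring
    _ = D1 n i k := by
        rw [sum_delta, sum_delta, dif_pos i.isLt]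
        have hk := k.isLt
        have hi := i.isLt
        simp only [Me, D1, Matrix.of_apply, Fin.eta]
        split_ifs <;>
          first
          | ring1
          | (exfalso; omega)
          | exact (‹False›).elim
          | (norm_cast <;> omega)
          | (field_simp <;> norm_cast <;> omega)
        
lemma mulWQe (n : ℕ) : W n * Qe n = Me n := by
  ext i k
  rw [Matrix.mul_apply]
  by_cases hi : (i : ℕ) = n - 1
  · have hW : ∀ j : Fin n, W n i j = 1 := by intro j; simp [W, hi]
    simp only [hW, one_mul]
    have hQ : ∀ j : Fin n, Qe n j k
        = Me n j k + (if (j : ℕ) = n - 1 then -(((k : ℕ) : ℝ)) ^ 2 else 0) := by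
      intro j
      by_cases hj : (j : ℕ) = n - 1
      · have hk := k.isLt
        have : Me n j k = 0 := by
          simp only [Me, Matrix.of_apply]; rw [if_neg]; omega
        simp [Qe, hj, this]
      · simp [Qe, hj]
    rw [Finset.sum_congr rfl (fun j _ => hQ j), Finset.sum_add_distrib, sum_Me,
      sum_delta, dif_pos (by omega : n - 1 < n)]
    have hk := k.isLt
    have : Me n i k = 0 := by
      simp only [Me, Matrix.of_apply]; rw [if_neg]; omega
    rw [this]; ring
  · have hW : ∀ j : Fin n, W n i j = if i = j then 1 else 0 := by
      intro j; simp [W, hi]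
    simp only [hW, ite_mul, one_mul, zero_mul]
    rw [Finset.sum_ite_eq]
    simp [Qe, hi]

lemma detS0 (n : ℕ) : IsUnit (S0 n).det := by
  have ht : (S0 n).BlockTriangular id := by
    intro i j hij
    simp only [id_eq] at hij
    simp only [S0, Matrix.of_apply]
    rw [if_neg (by omega), if_neg (by omega)]
  rw [Matrix.det_of_upperTriangular ht]
  rw [isUnit_iff_ne_zero]
  apply Finset.prod_ne_zero_iff.2
  intro i _
  simp only [S0, Matrix.of_apply, if_pos rfl]
  split_ifs <;> norm_num

lemma detW (n : ℕ) : IsUnit (W n).det := by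
  have ht : (W n).BlockTriangular (fun i => OrderDual.toDual i) := by
    intro i j hij
    have hij' : (i : ℕ) < (j : ℕ) := hij
    simp only [W, Matrix.of_apply]
    have hjn := j.isLt
    rw [if_neg (by omega), if_neg (by intro h; rw [h] at hij'; omega)]
  rw [Matrix.det_of_lowerTriangular _ ht]
  rw [isUnit_iff_ne_zero]
  apply Finset.prod_ne_zero_iff.2
  intro i _
  simp only [W, Matrix.of_apply]
  split_ifs <;> norm_num

/-- For every `n ≥ 2`, with `Q = W⁻¹ S₀⁻¹ D₁`, the sum of all 2×2 principal minors of `Q`,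
`E₂(Q) = Σ_{i<j} (Q_ii Q_jj - Q_ij Q_ji)`, equals `(n-1)²((n-1)² - 1)/3`. -/
theorem stmt2 (n : ℕ) (hn : 2 ≤ n) :
    let Q := (W n)⁻¹ * (S0 n)⁻¹ * D1 n
    ∑ i : Fin n, ∑ j : Fin n, (if i < j then Q i i * Q j j - Q i j * Q j i else 0)
      = ((n : ℝ) - 1) ^ 2 * (((n : ℝ) - 1) ^ 2 - 1) / 3 := by
  intro Q
  have hQ : Q = Qe n := by
    show (W n)⁻¹ * (S0 n)⁻¹ * D1 n = Qe n
    rw [Matrix.mul_assoc, ← mulS0Me n, ← Matrix.mul_assoc (S0 n)⁻¹,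
      Matrix.nonsing_inv_mul _ (detS0 n), Matrix.one_mul, ← mulWQe n,
      ← Matrix.mul_assoc, Matrix.nonsing_inv_mul _ (detW n), Matrix.one_mul]
  rw [hQ]
  have h1 : ∀ i j : Fin n,
      (if i < j then Qe n i i * Qe n j j - Qe n i j * Qe n j i else 0)
      = if (j : ℕ) = n - 1 then
          (if (i : ℕ) < n - 1 ∧ (n - 1) % 2 ≠ (i : ℕ) % 2 then
            2 * ((n - 1 : ℕ) : ℝ) * ((i : ℕ) : ℝ) ^ 2 else 0)
        else 0 := by
    intro i j
    have hi := i.isLt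
    have hj2 := j.isLt
    simp only [Qe, Me, Matrix.of_apply, Fin.lt_def]
    by_cases hj : (j : ℕ) = n - 1
    · rw [hj]
      split_ifs <;>
        first
        | ring1
        | (exfalso; omega)
        | (simp_all; try ring1)
    · rw [if_neg hj]
      split_ifs <;>
        first
        | ring1
        | (exfalso; omega)
        | (simp_all; try ring1)
  rw [Finset.sum_congr rfl (fun i _ => Finset.sum_congr rfl (fun j _ => h1 i j))]
  have h2 : ∀ i : Fin n,
      (∑ j : Fin n, if (j : ℕ) = n - 1 then
          (if (i : ℕ) < n - 1 ∧ (n - 1) % 2 ≠ (i : ℕ) % 2 then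
            2 * ((n - 1 : ℕ) : ℝ) * ((i : ℕ) : ℝ) ^ 2 else 0)
        else 0)
      = (if (i : ℕ) < n - 1 ∧ (n - 1) % 2 ≠ (i : ℕ) % 2 then
            2 * ((n - 1 : ℕ) : ℝ) * ((i : ℕ) : ℝ) ^ 2 else 0) := by
    intro i
    rw [sum_delta, dif_pos (by omega : n - 1 < n)]
  rw [Finset.sum_congr rfl (fun i _ => h2 i)]
  have h3 : (∑ i : Fin n, if (i : ℕ) < n - 1 ∧ (n - 1) % 2 ≠ (i : ℕ) % 2 then
        2 * ((n - 1 : ℕ) : ℝ) * ((i : ℕ) : ℝ) ^ 2 else 0)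
      = ∑ i ∈ Finset.range n, (if i < n - 1 ∧ (n - 1) % 2 ≠ i % 2 then
        2 * ((n - 1 : ℕ) : ℝ) * (i : ℝ) ^ 2 else 0) :=
    Fin.sum_univ_eq_sum_range (fun i => if i < n - 1 ∧ (n - 1) % 2 ≠ i % 2 then
        2 * ((n - 1 : ℕ) : ℝ) * (i : ℝ) ^ 2 else 0) n
  rw [h3]
  rw [← Finset.sum_subset (Finset.range_subset_range.2 (by omega : n - 1 ≤ n))
    (by intro x _ hx; rw [if_neg]; simp only [Finset.mem_range] at hx; omega)]
  have h4 : ∀ i ∈ Finset.range (n - 1),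
      (if i < n - 1 ∧ (n - 1) % 2 ≠ i % 2 then
        2 * ((n - 1 : ℕ) : ℝ) * (i : ℝ) ^ 2 else 0)
      = 2 * ((n - 1 : ℕ) : ℝ) * (if (n - 1) % 2 = i % 2 then (0:ℝ) else (i : ℝ) ^ 2) := by
    intro i hi
    simp only [Finset.mem_range] at hi
    split_ifs <;> first | ring1 | (exfalso; omega)
  rw [Finset.sum_congr rfl h4, ← Finset.mul_sum, H_eq]
  have hcast : ((n - 1 : ℕ) : ℝ) = (n : ℝ) - 1 := by
    push_cast [Nat.cast_sub (by omega : 1 ≤ n)]; ring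
  rw [hcast]; ring
end

section
/- For every integer n ≥ 1, the matrix S₀ is invertible and ‖S₀⁻¹‖ ≤ n, where ‖·‖ is the matrix norm induced by the ℓ∞ vector norm. -/
/-!
`S₀` is upper triangular and row `i` of `S₀ X = I` reads `dᵢ Xᵢₖ - ½ Xᵢ₊₂,ₖ = δᵢₖ`
(`d₀ = 1`, `dᵢ = ½` otherwise). Solving upwards, row `i` of `S₀⁻¹` is supported on the
columns `k ≥ i` with `k ≡ i (mod 2)`, with entries `1` in row `0` and `2` in every other row.
Such a row has at most `⌈(n - i) / 2⌉` nonzero entries, so its absolute sum is at most `n`.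
-/

open Matrix

/-- The matrix norm induced by the `ℓ∞` vector norm: the maximum absolute row sum. -/
noncomputable def matNorm {ι κ : Type*} [Fintype ι] [Fintype κ] (A : Matrix ι κ ℝ) : ℝ :=
  ⨆ i, ∑ j, |A i j|

lemma Fin.sum_univ_ite_val_eq {M : Type*} [AddCommMonoid M] (n m : ℕ) (c : M) :
    ∑ j : Fin n, (if (j : ℕ) = m then c else 0) = if m < n then c else 0 := by
  rw [Fin.sum_univ_eq_sum_range (fun j => if j = m then c else 0), Finset.sum_ite_eq']
  simp

lemma matNorm_le_of_forall_sum_abs_le {ι κ : Type*} [Fintype ι] [Fintype κ]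
    {A : Matrix ι κ ℝ} {c : ℝ} (hc : 0 ≤ c) (h : ∀ i, ∑ j, |A i j| ≤ c) : matNorm A ≤ c :=
  Real.iSup_le h hc

/-- Independent of `n`: truncating an upper triangular matrix commutes with inverting it. -/
def S0InvEntry (i k : ℕ) : ℕ :=
  if i ≤ k ∧ k % 2 = i % 2 then (if i = 0 then 1 else 2) else 0

lemma S0InvEntry_eq_zero_of_lt {i k : ℕ} (h : k < i) : S0InvEntry i k = 0 := by
  simp [S0InvEntry, Nat.not_le.mpr h]

lemma S0InvEntry_recurrence (i k : ℕ) :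
    (if i = 0 then (1 : ℝ) else 1 / 2) * S0InvEntry i k - 1 / 2 * S0InvEntry (i + 2) k =
      if i = k then 1 else 0 := by
  unfold S0InvEntry
  split_ifs <;> push_cast <;> first | contradiction | omega | norm_num

lemma sum_range_S0InvEntry (i n : ℕ) :
    ∑ k ∈ Finset.range n, S0InvEntry i k =
      if i = 0 then (n + 1) / 2 else 2 * ((n - i + 1) / 2) := by
  induction n with
  | zero => simp
  | succ n ih =>
    rw [Finset.sum_range_succ, ih]
    unfold S0InvEntry
    split_ifs <;> omega

lemma sum_range_S0InvEntry_le (i n : ℕ) : ∑ k ∈ Finset.range n, S0InvEntry i k ≤ n := by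
  rw [sum_range_S0InvEntry]
  split_ifs <;> omega

noncomputable def S0Inv (n : ℕ) : Matrix (Fin n) (Fin n) ℝ :=
  Matrix.of fun i k => (S0InvEntry i k : ℝ)

lemma S0_mul_S0Inv (n : ℕ) : S0 n * S0Inv n = 1 := by
  ext i k
  have hrow : ∀ j : Fin n, S0 n i j * S0Inv n j k =
      (if (j : ℕ) = i then (if (i : ℕ) = 0 then (1 : ℝ) else 1 / 2) * S0InvEntry i k else 0) -
        (if (j : ℕ) = i + 2 then (1 / 2 : ℝ) * S0InvEntry (i + 2) k else 0) := by
    intro j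
    simp only [S0, S0Inv, of_apply]
    split_ifs <;> first | omega | simp_all
  have hlast_rows : (if (i : ℕ) + 2 < n then (1 / 2 : ℝ) * S0InvEntry (i + 2) k else 0) =
      1 / 2 * S0InvEntry (i + 2) k := by
    split_ifs with h
    · rfl
    · rw [S0InvEntry_eq_zero_of_lt (by omega)]; simp
  rw [mul_apply, Finset.sum_congr rfl fun j _ => hrow j, Finset.sum_sub_distrib,
    Fin.sum_univ_ite_val_eq, Fin.sum_univ_ite_val_eq, if_pos i.isLt, hlast_rows,
    S0InvEntry_recurrence, one_apply]
  simp only [Fin.val_inj]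

lemma matNorm_S0Inv_le (n : ℕ) : matNorm (S0Inv n) ≤ n := by
  refine matNorm_le_of_forall_sum_abs_le n.cast_nonneg fun i => ?_
  have hrow : ∑ k, |S0Inv n i k| = ((∑ k ∈ Finset.range n, S0InvEntry i k : ℕ) : ℝ) := by
    simp [S0Inv, Fin.sum_univ_eq_sum_range (fun k => (S0InvEntry i k : ℝ))]
  rw [hrow]
  exact_mod_cast sum_range_S0InvEntry_le i n

theorem stmt5_general (n : ℕ) :
    IsUnit (S0 n) ∧ matNorm ((S0 n)⁻¹) ≤ (n : ℝ) := by
  have hinv := S0_mul_S0Inv n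
  refine ⟨(isUnit_iff_isUnit_det _).mpr (isUnit_det_of_right_inverse hinv), ?_⟩
  rw [inv_eq_right_inv hinv]
  exact matNorm_S0Inv_le n

/-- For every `n ≥ 1`, `S₀` is invertible and `‖S₀⁻¹‖ ≤ n` in the induced `ℓ∞` norm. -/
theorem stmt5 (n : ℕ) (hn : 1 ≤ n) :
    IsUnit (S0 n) ∧ matNorm ((S0 n)⁻¹) ≤ (n : ℝ) :=
  stmt5_general n
end

section
/- For every integer n ≥ 3, the matrices H, S₀ and S₁ are invertible and the spectral radius of G = H⁻¹ S₀⁻¹ S₁⁻¹ D₂ satisfies ρ(G) ≤ (2/3) n (n−2) (n−1)². -/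
open Matrix

/-- Truncated conversion operator from `C^(1)` to `C^(2)` coefficients
(1-based indexing): `(S₁)_{j,j} = 1/j`, `(S₁)_{j,j+2} = -1/(j+2)`. -/
noncomputable def S1 (n : ℕ) : Matrix (Fin n) (Fin n) ℝ :=
  Matrix.of fun i j =>
    if (j : ℕ) = (i : ℕ) then 1 / ((i : ℕ) + 1 : ℝ)
    else if (j : ℕ) = (i : ℕ) + 2 then -(1 / ((i : ℕ) + 3 : ℝ)) else 0

/-- Truncated second-order ultraspherical differentiation operator
(1-based indexing): `(D₂)_{j,j+2} = 2(j+1)`. -/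
noncomputable def D2 (n : ℕ) : Matrix (Fin n) (Fin n) ℝ :=
  Matrix.of fun i j =>
    if (j : ℕ) = (i : ℕ) + 2 then 2 * ((i : ℕ) + 2 : ℝ) else 0

/-- Boundary-condition matrix: first `n-2` rows of the identity, row `n-1` all ones,
row `n` alternating `(1, -1, 1, -1, …)`. -/
noncomputable def H (n : ℕ) : Matrix (Fin n) (Fin n) ℝ :=
  Matrix.of fun i j =>
    if (i : ℕ) = n - 2 then 1
    else if (i : ℕ) = n - 1 then (-1 : ℝ) ^ (j : ℕ)
    else if i = j then 1 else 0

open Finset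

noncomputable def cc (k : ℕ) : ℝ := if k = 0 then 1/2 else 1

noncomputable def gf (k j : ℕ) : ℝ :=
  if j % 2 = k % 2 ∧ k + 2 ≤ j then cc k * j * ((j:ℝ)^2 - (k:ℝ)^2) else 0

lemma gf_eq_zero_of_lt {k j : ℕ} (h : j < k + 2) : gf k j = 0 := by
  unfold gf; rw [if_neg]; rintro ⟨-, h2⟩; omega

lemma gf_eq_zero_of_parity {k j : ℕ} (h : ¬ j % 2 = k % 2) : gf k j = 0 := by
  unfold gf; rw [if_neg]; rintro ⟨h1, -⟩; exact h h1

lemma parity_sum (f : ℕ → ℝ) (p : ℕ) (hp : p < 2) (T : ℕ) :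
    ∑ k ∈ range (2*T), (if k % 2 = p then f k else 0) = ∑ t ∈ range T, f (2*t+p) := by
  induction T with
  | zero => simp
  | succ T ih =>
    have h2 : 2*(T+1) = (2*T + 1) + 1 := by ring
    rw [h2, Finset.sum_range_succ, Finset.sum_range_succ, ih, Finset.sum_range_succ]
    have e1 : (2*T) % 2 = 0 := by omega
    have e2 : (2*T+1) % 2 = 1 := by omega
    rw [e1, e2]
    interval_cases p
    · norm_num
    · norm_num [add_assoc]

/-- telescoping function -/
lemma gf_nonneg (k j : ℕ) : 0 ≤ gf k j := by
  unfold gf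
  split_ifs with h
  · rcases h with ⟨-, h2⟩
    have hkj : (k:ℝ) ≤ (j:ℝ) := by exact_mod_cast Nat.le_of_lt (by omega)
    have hk : (0:ℝ) ≤ k := Nat.cast_nonneg k
    have hsq : (k:ℝ)^2 ≤ (j:ℝ)^2 := by nlinarith
    have hcc : 0 ≤ cc k := by unfold cc; split_ifs <;> norm_num
    have hj : (0:ℝ) ≤ j := Nat.cast_nonneg j
    exact mul_nonneg (mul_nonneg hcc hj) (by linarith)
  · exact le_refl 0

noncomputable def uu (j : ℕ) (k : ℕ) : ℝ :=
  (j:ℝ)/6 * k * ((k:ℝ)-1) * ((k:ℝ)-2) - (j:ℝ)^3/2 * k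

/-- pointwise indicator form of gf -/
lemma gf_indicator (k j : ℕ) :
    gf k j = if k % 2 = j % 2 then (if k + 2 ≤ j then cc k * j * ((j:ℝ)^2 - (k:ℝ)^2) else 0) else 0 := by
  unfold gf
  by_cases hk : k % 2 = j % 2
  · rw [if_pos hk]
    by_cases hk2 : k + 2 ≤ j
    · rw [if_pos ⟨hk.symm, hk2⟩, if_pos hk2]
    · rw [if_neg (by tauto), if_neg hk2]
  · rw [if_neg hk, if_neg (by rintro ⟨h1, -⟩; exact hk h1.symm)]

/-- the key column-sum identity over `range j` -/
lemma colsum0 (j : ℕ) : ∑ k ∈ range j, gf k j = (j:ℝ)^2 * ((j:ℝ)^2 - 1) / 3 := by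
  obtain ⟨p, T, hp2, hj⟩ : ∃ p T, p < 2 ∧ 2*T + p = j := ⟨j % 2, j/2, by omega, by omega⟩
  have step1 : ∑ k ∈ range j, gf k j
      = ∑ t ∈ range T, (if 2*t+p + 2 ≤ j then cc (2*t+p) * j * ((j:ℝ)^2 - ((2*t+p : ℕ):ℝ)^2) else 0) := by
    have e : ∑ k ∈ range j, gf k j
        = ∑ k ∈ range j, (if k % 2 = p then (if k + 2 ≤ j then cc k * j * ((j:ℝ)^2 - (k:ℝ)^2) else 0) else 0) := by
      refine Finset.sum_congr rfl (fun k _ => ?_)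
      rw [gf_indicator k j]
      congr 1
      simp only [eq_iff_iff]
      omega
    rw [e, show range j = range (2*T+p) from by rw [hj]]
    rcases (by omega : p = 0 ∨ p = 1) with h0 | h1
    · subst h0
      rw [add_zero, parity_sum _ 0 (by omega) T]
    · subst h1
      rw [Finset.sum_range_succ, if_neg (by omega : ¬ (2*T) % 2 = 1), add_zero,
        parity_sum _ 1 (by omega) T]
  rw [step1]
  have step2 : ∀ t ∈ range T, (if 2*t+p + 2 ≤ j then cc (2*t+p) * (j:ℝ) * ((j:ℝ)^2 - ((2*t+p:ℕ):ℝ)^2) else 0)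
      = cc (2*t+p) * (j:ℝ) * ((j:ℝ)^2 - ((2*t+p:ℕ):ℝ)^2) := by
    intro t ht
    rw [if_pos (by simp only [Finset.mem_range] at ht; omega)]
  rw [Finset.sum_congr rfl step2]
  rcases (by omega : p = 0 ∨ p = 1) with h0 | h1
  · subst h0
    rcases Nat.eq_zero_or_pos T with hT0 | hT1
    · have hj0 : j = 0 := by omega
      subst hj0; rw [hT0]; simp
    · obtain ⟨T', rfl⟩ : ∃ T', T = T' + 1 := ⟨T - 1, by omega⟩
      rw [Finset.sum_range_succ']
      have tele : ∀ t : ℕ, cc (2*(t+1)+0) * (j:ℝ) * ((j:ℝ)^2 - ((2*(t+1)+0:ℕ):ℝ)^2)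
          = (fun s => uu j (2*s+2)) t - (fun s => uu j (2*s+2)) (t+1) := by
        intro t
        rw [show cc (2*(t+1)+0) = 1 from by unfold cc; rw [if_neg (by omega)]]
        simp only
        unfold uu; push_cast; ring
      rw [Finset.sum_congr rfl (fun t _ => tele t), Finset.sum_range_sub' (fun s => uu j (2*s+2)) T']
      rw [show 2*T'+2 = j from by omega,
        show cc (2*0+0) = 1/2 from by unfold cc; rw [if_pos (by omega)]]
      have hc : ((2*0+0 : ℕ):ℝ) = 0 := by norm_num
      rw [hc]
      unfold uu; push_cast; ring
  · subst h1
    have tele : ∀ t : ℕ, cc (2*t+1) * (j:ℝ) * ((j:ℝ)^2 - ((2*t+1:ℕ):ℝ)^2)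
        = (fun s => uu j (2*s+1)) t - (fun s => uu j (2*s+1)) (t+1) := by
      intro t
      rw [show cc (2*t+1) = 1 from by unfold cc; rw [if_neg (by omega)]]
      simp only
      unfold uu; push_cast; ring
    rw [Finset.sum_congr rfl (fun t _ => tele t), Finset.sum_range_sub' (fun s => uu j (2*s+1)) T]
    rw [show 2*T+1 = j from by omega]
    unfold uu; push_cast; ring

/-- padding: the column sum over any `range m` with `j ≤ m + 1` -/
lemma colsum_range (j m : ℕ) (h : j ≤ m + 1) :
    ∑ k ∈ range m, gf k j = (j:ℝ)^2 * ((j:ℝ)^2 - 1) / 3 := by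
  rcases le_or_gt j m with hm | hm
  · rw [← colsum0 j]
    symm
    apply Finset.sum_subset (Finset.range_subset_range.mpr hm)
    intro k _ hk
    simp only [Finset.mem_range, not_lt] at hk
    exact gf_eq_zero_of_lt (by omega)
  · have hjm : j = m + 1 := by omega
    rw [← colsum0 j, hjm, Finset.sum_range_succ, ← hjm,
      gf_eq_zero_of_parity (by omega), add_zero]

noncomputable def dd (k : ℕ) : ℝ := if k = 0 then 1 else 1/2

/-- key entrywise algebraic identity -/
lemma entry_id (i j : ℕ) :
    (1/((i:ℝ)+1)) * (dd i * gf i j + (-(1/2)) * gf (i+2) j)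
      + (-(1/((i:ℝ)+3))) * (dd (i+2) * gf (i+2) j + (-(1/2)) * gf (i+4) j)
      = if j = i + 2 then 2 * ((i:ℝ) + 2) else 0 := by
  have h1 : ((i:ℝ)+1) ≠ 0 := by positivity
  have h3 : ((i:ℝ)+3) ≠ 0 := by positivity
  have hd2 : dd (i+2) = 1/2 := by unfold dd; rw [if_neg (by omega)]
  by_cases hpar : j % 2 = i % 2
  · -- same parity
    have hp2 : j % 2 = (i+2) % 2 := by omega
    have hp4 : j % 2 = (i+4) % 2 := by omega
    rcases (by omega : j < i + 2 ∨ j = i + 2 ∨ j = i + 4 ∨ i + 6 ≤ j) with hc | hc | hc | hc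
    · rw [gf_eq_zero_of_lt (by omega), gf_eq_zero_of_lt (by omega),
        gf_eq_zero_of_lt (by omega), if_neg (by omega)]
      ring
    · subst hc
      rw [if_pos rfl]
      rw [show gf i (i+2) = cc i * (↑(i+2):ℝ) * ((↑(i+2):ℝ)^2 - (i:ℝ)^2) from by
        unfold gf; rw [if_pos ⟨hpar, le_refl _⟩],
        gf_eq_zero_of_lt (by omega), gf_eq_zero_of_lt (by omega)]
      rcases Nat.eq_zero_or_pos i with h0 | h0
      · subst h0
        unfold dd cc; norm_num
      · rw [show dd i = 1/2 from by unfold dd; rw [if_neg (by omega)],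
          show cc i = 1 from by unfold cc; rw [if_neg (by omega)]]
        push_cast
        field_simp
        ring
    · subst hc
      rw [show gf i (i+4) = cc i * (↑(i+4):ℝ) * ((↑(i+4):ℝ)^2 - (i:ℝ)^2) from by
          unfold gf; rw [if_pos ⟨hpar, by omega⟩],
        show gf (i+2) (i+4) = cc (i+2) * (↑(i+4):ℝ) * ((↑(i+4):ℝ)^2 - (↑(i+2):ℝ)^2) from by
          unfold gf; rw [if_pos ⟨hp2, by omega⟩],
        gf_eq_zero_of_lt (by omega), if_neg (by omega),
        show cc (i+2) = 1 from by unfold cc; rw [if_neg (by omega)], hd2]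
      rcases Nat.eq_zero_or_pos i with h0 | h0
      · subst h0; unfold dd cc; norm_num
      · rw [show dd i = 1/2 from by unfold dd; rw [if_neg (by omega)],
          show cc i = 1 from by unfold cc; rw [if_neg (by omega)]]
        push_cast
        field_simp
        ring
    · rw [show gf i j = cc i * (j:ℝ) * ((j:ℝ)^2 - (i:ℝ)^2) from by
          unfold gf; rw [if_pos ⟨hpar, by omega⟩],
        show gf (i+2) j = cc (i+2) * (j:ℝ) * ((j:ℝ)^2 - (↑(i+2):ℝ)^2) from by
          unfold gf; rw [if_pos ⟨hp2, by omega⟩],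
        show gf (i+4) j = cc (i+4) * (j:ℝ) * ((j:ℝ)^2 - (↑(i+4):ℝ)^2) from by
          unfold gf; rw [if_pos ⟨hp4, by omega⟩],
        if_neg (by omega),
        show cc (i+2) = 1 from by unfold cc; rw [if_neg (by omega)],
        show cc (i+4) = 1 from by unfold cc; rw [if_neg (by omega)], hd2]
      rcases Nat.eq_zero_or_pos i with h0 | h0
      · subst h0; unfold dd cc; push_cast; field_simp; ring
      · rw [show dd i = 1/2 from by unfold dd; rw [if_neg (by omega)],
          show cc i = 1 from by unfold cc; rw [if_neg (by omega)]]
        push_cast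
        field_simp
        ring
  · -- opposite parity: everything vanishes
    rw [gf_eq_zero_of_parity hpar, gf_eq_zero_of_parity (by omega),
      gf_eq_zero_of_parity (by omega), if_neg (by omega)]
    ring

/-- product of a 2-band upper matrix with a matrix given by a ℕ-formula
whose entries vanish when `j < k + 2`. -/
lemma band_mul {n : ℕ} (a b : ℕ → ℝ) (F : ℕ → ℕ → ℝ)
    (hF : ∀ k j', j' < k + 2 → F k j' = 0) (i j : Fin n) :
    ((Matrix.of fun i j : Fin n =>
        if (j:ℕ) = (i:ℕ) then a (i:ℕ) else if (j:ℕ) = (i:ℕ)+2 then b (i:ℕ) else 0) *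
      (Matrix.of fun i j : Fin n => F (i:ℕ) (j:ℕ))) i j
      = a (i:ℕ) * F (i:ℕ) (j:ℕ) + b (i:ℕ) * F ((i:ℕ)+2) (j:ℕ) := by
  rw [Matrix.mul_apply]
  have key : ∀ k : Fin n,
      (Matrix.of fun i j : Fin n =>
        if (j:ℕ) = (i:ℕ) then a (i:ℕ) else if (j:ℕ) = (i:ℕ)+2 then b (i:ℕ) else 0) i k *
        (Matrix.of fun i j : Fin n => F (i:ℕ) (j:ℕ)) k j
      = (if k = i then a (i:ℕ) * F (i:ℕ) (j:ℕ) else 0)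
        + (if (k:ℕ) = (i:ℕ)+2 then b (i:ℕ) * F ((i:ℕ)+2) (j:ℕ) else 0) := by
    intro k
    simp only [Matrix.of_apply]
    by_cases h1 : (k:ℕ) = (i:ℕ)
    · have hk : k = i := Fin.ext h1
      rw [if_pos h1, if_pos hk, if_neg (by omega), add_zero, hk]
    · rw [if_neg h1, if_neg (fun h => h1 (congrArg Fin.val h)), zero_add]
      by_cases h2 : (k:ℕ) = (i:ℕ)+2
      · rw [if_pos h2, if_pos h2, h2]
      · rw [if_neg h2, if_neg h2, zero_mul]
  rw [Finset.sum_congr rfl (fun k _ => key k), Finset.sum_add_distrib]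
  congr 1
  · rw [Finset.sum_ite_eq' Finset.univ i (fun _ => a (i:ℕ) * F (i:ℕ) (j:ℕ)),
      if_pos (Finset.mem_univ i)]
  · by_cases hn : (i:ℕ)+2 < n
    · have : ∀ k : Fin n, ((k:ℕ) = (i:ℕ)+2) ↔ (k = (⟨(i:ℕ)+2, hn⟩ : Fin n)) := by
        intro k; constructor
        · intro h; exact Fin.ext h
        · intro h; rw [h]
      rw [Finset.sum_congr rfl (fun k _ => by rw [if_congr (this k) rfl rfl])]
      rw [Finset.sum_ite_eq' Finset.univ (⟨(i:ℕ)+2, hn⟩ : Fin n)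
        (fun _ => b (i:ℕ) * F ((i:ℕ)+2) (j:ℕ)), if_pos (Finset.mem_univ _)]
    · have hF0 : F ((i:ℕ)+2) (j:ℕ) = 0 := hF _ _ (by omega)
      rw [hF0, mul_zero]
      apply Finset.sum_eq_zero
      intro k _
      rw [if_neg (by omega), ]

noncomputable def botf (j : ℕ) : ℝ := -((j:ℝ)^2 * ((j:ℝ)^2 - 1)) / 3

/-- entries of the explicit matrix G -/
noncomputable def Gf (n k j : ℕ) : ℝ :=
  if n - 2 ≤ k then (if j % 2 = k % 2 then botf j else 0) else gf k j

lemma negone_pow_mod (a : ℕ) : (-1:ℝ)^a = (-1)^(a % 2) := by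
  conv_lhs => rw [← Nat.div_add_mod a 2]
  rw [pow_add, pow_mul]; norm_num

lemma negone_pow_congr {a b : ℕ} (h : a % 2 = b % 2) : (-1:ℝ)^a = (-1:ℝ)^b := by
  rw [negone_pow_mod a, negone_pow_mod b, h]

/-- column sums of Gf vanish -/
lemma Gf_colsum {n : ℕ} (hn : 3 ≤ n) (j : ℕ) (hj : j < n) :
    ∑ k ∈ range n, Gf n k j = 0 := by
  obtain ⟨m, rfl⟩ : ∃ m, n = m + 3 := ⟨n - 3, by omega⟩
  have h2 : m + 3 - 2 = m + 1 := by omega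
  rw [show m + 3 = (m+1) + 1 + 1 from rfl, Finset.sum_range_succ, Finset.sum_range_succ]
  have e1 : ∑ k ∈ range (m+1), Gf (m+3) k j = ∑ k ∈ range (m+1), gf k j := by
    refine Finset.sum_congr rfl (fun k hk => ?_)
    simp only [Finset.mem_range] at hk
    unfold Gf; rw [if_neg (by omega)]
  rw [e1, colsum_range j (m+1) (by omega)]
  have b1 : Gf (m+3) (m+1) j = if j % 2 = (m+1) % 2 then botf j else 0 := by
    unfold Gf; rw [if_pos (by omega)]
  have b2 : Gf (m+3) (m+2) j = if j % 2 = (m+2) % 2 then botf j else 0 := by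
    unfold Gf; rw [if_pos (by omega)]
  rw [b1, b2]
  unfold botf
  rcases (by omega : j % 2 = (m+1) % 2 ∨ j % 2 = (m+2) % 2) with hp | hp
  · rw [if_pos hp, if_neg (by omega)]
    ring
  · rw [if_neg (by omega), if_pos hp]
    ring

/-- entries of Gf have the parity of their column -/
lemma Gf_parity {n : ℕ} (k j : ℕ) (h : ¬ j % 2 = k % 2) : Gf n k j = 0 := by
  unfold Gf
  split_ifs with h1
  · rfl
  · exact gf_eq_zero_of_parity h

/-- alternating column sums of Gf vanish -/
lemma Gf_altsum {n : ℕ} (hn : 3 ≤ n) (j : ℕ) (hj : j < n) :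
    ∑ k ∈ range n, (-1:ℝ)^k * Gf n k j = 0 := by
  have e : ∀ k, (-1:ℝ)^k * Gf n k j = (-1:ℝ)^j * Gf n k j := by
    intro k
    by_cases hp : j % 2 = k % 2
    · rw [negone_pow_congr hp]
    · rw [Gf_parity k j hp, mul_zero, mul_zero]
  rw [Finset.sum_congr rfl (fun k _ => e k), ← Finset.mul_sum, Gf_colsum hn j hj, mul_zero]

/-- H times the explicit G matrix -/
lemma H_mul_Gex {n : ℕ} (hn : 3 ≤ n) :
    H n * (Matrix.of fun i j : Fin n => Gf n (i:ℕ) (j:ℕ))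
      = Matrix.of fun i j : Fin n => gf (i:ℕ) (j:ℕ) := by
  ext i j
  rw [Matrix.mul_apply]
  simp only [Matrix.of_apply]
  by_cases h1 : (i:ℕ) = n - 2
  · -- all-ones row
    have e : ∀ k : Fin n, H n i k * Gf n (k:ℕ) (j:ℕ) = Gf n (k:ℕ) (j:ℕ) := by
      intro k
      unfold H
      simp only [Matrix.of_apply]
      rw [if_pos h1, one_mul]
    rw [Finset.sum_congr rfl (fun k _ => e k),
      show (∑ k : Fin n, Gf n (k:ℕ) (j:ℕ)) = ∑ k ∈ range n, Gf n k (j:ℕ) from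
        Fin.sum_univ_eq_sum_range (fun k => Gf n k (j:ℕ)) n,
      Gf_colsum hn (j:ℕ) j.isLt]
    unfold gf
    rw [if_neg]
    rintro ⟨-, hj2⟩
    omega
  · by_cases h2 : (i:ℕ) = n - 1
    · -- alternating row
      have e : ∀ k : Fin n, H n i k * Gf n (k:ℕ) (j:ℕ) = (-1:ℝ)^(k:ℕ) * Gf n (k:ℕ) (j:ℕ) := by
        intro k
        unfold H
        simp only [Matrix.of_apply]
        rw [if_neg h1, if_pos h2]
      rw [Finset.sum_congr rfl (fun k _ => e k),
        show (∑ k : Fin n, (-1:ℝ)^(k:ℕ) * Gf n (k:ℕ) (j:ℕ))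
          = ∑ k ∈ range n, (-1:ℝ)^k * Gf n k (j:ℕ) from
          Fin.sum_univ_eq_sum_range (fun k => (-1:ℝ)^k * Gf n k (j:ℕ)) n,
        Gf_altsum hn (j:ℕ) j.isLt]
      unfold gf
      rw [if_neg]
      rintro ⟨-, hj2⟩
      omega
    · -- identity row
      have e : ∀ k : Fin n, H n i k * Gf n (k:ℕ) (j:ℕ)
          = if k = i then Gf n (i:ℕ) (j:ℕ) else 0 := by
        intro k
        unfold H
        simp only [Matrix.of_apply]
        rw [if_neg h1, if_neg h2]
        by_cases hik : i = k
        · rw [if_pos hik, if_pos hik.symm, one_mul, hik]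
        · rw [if_neg hik, if_neg (fun h => hik h.symm), zero_mul]
      rw [Finset.sum_congr rfl (fun k _ => e k),
        Finset.sum_ite_eq' Finset.univ i (fun _ => Gf n (i:ℕ) (j:ℕ)),
        if_pos (Finset.mem_univ i)]
      unfold Gf
      rw [if_neg (by omega)]


noncomputable def S0Tf (i j : ℕ) : ℝ := dd i * gf i j + (-(1/2)) * gf (i+2) j

lemma S0Tf_zero : ∀ (k j : ℕ), j < k + 2 → S0Tf k j = 0 := by
  intro k j h
  unfold S0Tf
  rw [gf_eq_zero_of_lt h, gf_eq_zero_of_lt (by omega)]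
  ring

lemma S0_eq (n : ℕ) : S0 n = Matrix.of fun i j : Fin n =>
    if (j:ℕ) = (i:ℕ) then dd (i:ℕ) else if (j:ℕ) = (i:ℕ)+2 then (fun _ : ℕ => -(1/2:ℝ)) (i:ℕ) else 0 := by
  ext i j
  unfold S0 dd
  norm_num

lemma S1_eq (n : ℕ) : S1 n = Matrix.of fun i j : Fin n =>
    if (j:ℕ) = (i:ℕ) then (fun k : ℕ => 1/((k:ℝ)+1)) (i:ℕ)
    else if (j:ℕ) = (i:ℕ)+2 then (fun k : ℕ => -(1/((k:ℝ)+3))) (i:ℕ) else 0 := by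
  ext i j
  unfold S1
  norm_num

/-- the main product identity -/
lemma main_id {n : ℕ} (hn : 3 ≤ n) :
    S1 n * (S0 n * (H n * Matrix.of fun i j : Fin n => Gf n (i:ℕ) (j:ℕ))) = D2 n := by
  rw [H_mul_Gex hn]
  have h1 : S0 n * (Matrix.of fun i j : Fin n => gf (i:ℕ) (j:ℕ))
      = Matrix.of fun i j : Fin n => S0Tf (i:ℕ) (j:ℕ) := by
    rw [S0_eq n]
    ext i j
    rw [band_mul dd (fun _ : ℕ => -(1/2:ℝ)) gf (fun k j' h => gf_eq_zero_of_lt h) i j]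
    rfl
  rw [h1]
  rw [S1_eq n]
  ext i j
  rw [band_mul (fun k : ℕ => 1/((k:ℝ)+1)) (fun k : ℕ => -(1/((k:ℝ)+3))) S0Tf S0Tf_zero i j]
  show _ = D2 n i j
  unfold S0Tf D2
  simp only [Matrix.of_apply]
  exact entry_id (i:ℕ) (j:ℕ)

lemma isUnit_S0 (n : ℕ) : IsUnit (S0 n) := by
  rw [Matrix.isUnit_iff_isUnit_det]
  have htri : (S0 n).BlockTriangular id := by
    intro i j hij
    unfold S0
    simp only [Matrix.of_apply]
    rw [if_neg (by simp only [id] at hij; omega), if_neg (by simp only [id] at hij; omega)]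
  rw [Matrix.det_of_upperTriangular htri]
  rw [isUnit_iff_ne_zero]
  apply Finset.prod_ne_zero_iff.mpr
  intro i _
  unfold S0
  simp only [Matrix.of_apply, if_true]
  split_ifs <;> norm_num

lemma isUnit_S1 (n : ℕ) : IsUnit (S1 n) := by
  rw [Matrix.isUnit_iff_isUnit_det]
  have htri : (S1 n).BlockTriangular id := by
    intro i j hij
    unfold S1
    simp only [Matrix.of_apply]
    rw [if_neg (by simp only [id] at hij; omega), if_neg (by simp only [id] at hij; omega)]
  rw [Matrix.det_of_upperTriangular htri]
  rw [isUnit_iff_ne_zero]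
  apply Finset.prod_ne_zero_iff.mpr
  intro i _
  unfold S1
  simp only [Matrix.of_apply, if_true]
  positivity


/-- explicit inverse of H -/
noncomputable def Hinvf (n i j : ℕ) : ℝ :=
  if i < n - 2 then (if j = i then 1 else 0)
  else if j < n - 2 then (if j % 2 = i % 2 then -1 else 0)
  else if j = n - 2 then 1/2
  else if i = n - 2 then (-1:ℝ)^n/2 else -((-1:ℝ)^n/2)

lemma H_mul_Hinv {n : ℕ} (hn : 3 ≤ n) :
    H n * (Matrix.of fun i j : Fin n => Hinvf n (i:ℕ) (j:ℕ)) = 1 := by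
  obtain ⟨m, rfl⟩ : ∃ m, n = m + 3 := ⟨n - 3, by omega⟩
  have h2 : m + 3 - 2 = m + 1 := by omega
  ext i j
  rw [Matrix.mul_apply, Matrix.one_apply]
  simp only [Matrix.of_apply]
  by_cases h1 : (i:ℕ) = m + 1
  · -- all-ones row
    have e : ∀ k : Fin (m+3), H (m+3) i k * Hinvf (m+3) (k:ℕ) (j:ℕ) = Hinvf (m+3) (k:ℕ) (j:ℕ) := by
      intro k
      unfold H
      simp only [Matrix.of_apply]
      rw [if_pos (by omega : (i:ℕ) = m + 3 - 2), one_mul]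
    rw [Finset.sum_congr rfl (fun k _ => e k),
      show (∑ k : Fin (m+3), Hinvf (m+3) (k:ℕ) (j:ℕ)) = ∑ k ∈ range (m+3), Hinvf (m+3) k (j:ℕ) from
        Fin.sum_univ_eq_sum_range (fun k => Hinvf (m+3) k (j:ℕ)) (m+3)]
    rw [show range (m+3) = range ((m+1)+1+1) from rfl, Finset.sum_range_succ, Finset.sum_range_succ]
    have e2 : ∑ k ∈ range (m+1), Hinvf (m+3) k (j:ℕ)
        = ∑ k ∈ range (m+1), (if (j:ℕ) = k then 1 else 0) := by
      refine Finset.sum_congr rfl (fun k hk => ?_)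
      simp only [Finset.mem_range] at hk
      unfold Hinvf
      rw [if_pos (by omega)]
    rw [e2, Finset.sum_ite_eq (range (m+1)) (j:ℕ) (fun _ => (1:ℝ))]
    have hb1 : Hinvf (m+3) (m+1) (j:ℕ) = if (j:ℕ) < m+1 then (if (j:ℕ) % 2 = (m+1) % 2 then -1 else 0)
        else if (j:ℕ) = m+1 then 1/2 else (-1:ℝ)^(m+3)/2 := by
      unfold Hinvf
      rw [if_neg (by omega), h2]
      by_cases hj : (j:ℕ) < m+1
      · rw [if_pos hj, if_pos hj]
      · rw [if_neg hj, if_neg hj]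
        by_cases hj2 : (j:ℕ) = m+1
        · rw [if_pos hj2, if_pos hj2]
        · rw [if_neg hj2, if_neg hj2, if_pos (by omega)]
    have hb2 : Hinvf (m+3) (m+2) (j:ℕ) = if (j:ℕ) < m+1 then (if (j:ℕ) % 2 = (m+2) % 2 then -1 else 0)
        else if (j:ℕ) = m+1 then 1/2 else -((-1:ℝ)^(m+3)/2) := by
      unfold Hinvf
      rw [if_neg (by omega), h2]
      by_cases hj : (j:ℕ) < m+1
      · rw [if_pos hj, if_pos hj]
      · rw [if_neg hj, if_neg hj]
        by_cases hj2 : (j:ℕ) = m+1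
        · rw [if_pos hj2, if_pos hj2]
        · rw [if_neg hj2, if_neg hj2, if_neg (by omega)]
    rw [hb1, hb2]
    by_cases hj : (j:ℕ) < m+1
    · rw [if_pos hj, if_pos hj, if_pos (Finset.mem_range.mpr hj), if_neg (by omega : ¬ i = j)]
      rcases (by omega : (j:ℕ) % 2 = (m+1) % 2 ∨ (j:ℕ) % 2 = (m+2) % 2) with hp | hp
      · rw [if_pos hp, if_neg (by omega)]; ring
      · rw [if_neg (by omega), if_pos hp]; ring
    · rw [if_neg hj, if_neg hj, if_neg (by simpa using hj)]
      by_cases hj2 : (j:ℕ) = m+1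
      · rw [if_pos hj2, if_pos hj2, if_pos (by exact Fin.ext (by omega) : i = j)]
        norm_num
      · rw [if_neg hj2, if_neg hj2, if_neg (by intro h; exact hj2 (by rw [← h]; omega) : ¬ i = j)]
        ring
  · by_cases hrow2 : (i:ℕ) = m + 2
    · -- alternating row
      have e : ∀ k : Fin (m+3), H (m+3) i k * Hinvf (m+3) (k:ℕ) (j:ℕ)
          = (-1:ℝ)^(k:ℕ) * Hinvf (m+3) (k:ℕ) (j:ℕ) := by
        intro k
        unfold H
        simp only [Matrix.of_apply]
        rw [if_neg (by omega : ¬ (i:ℕ) = m + 3 - 2), if_pos (by omega : (i:ℕ) = m + 3 - 1)]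
      rw [Finset.sum_congr rfl (fun k _ => e k),
        show (∑ k : Fin (m+3), (-1:ℝ)^(k:ℕ) * Hinvf (m+3) (k:ℕ) (j:ℕ))
          = ∑ k ∈ range (m+3), (-1:ℝ)^k * Hinvf (m+3) k (j:ℕ) from
          Fin.sum_univ_eq_sum_range (fun k => (-1:ℝ)^k * Hinvf (m+3) k (j:ℕ)) (m+3)]
      rw [show range (m+3) = range ((m+1)+1+1) from rfl, Finset.sum_range_succ, Finset.sum_range_succ]
      have e2 : ∑ k ∈ range (m+1), (-1:ℝ)^k * Hinvf (m+3) k (j:ℕ)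
          = ∑ k ∈ range (m+1), (if (j:ℕ) = k then (-1:ℝ)^k else 0) := by
        refine Finset.sum_congr rfl (fun k hk => ?_)
        simp only [Finset.mem_range] at hk
        unfold Hinvf
        rw [if_pos (by omega)]
        by_cases hjk : (j:ℕ) = k
        · rw [if_pos hjk, if_pos hjk, mul_one]
        · rw [if_neg hjk, if_neg hjk, mul_zero]
      rw [e2, Finset.sum_ite_eq (range (m+1)) (j:ℕ) (fun k => (-1:ℝ)^k)]
      have hb1 : Hinvf (m+3) (m+1) (j:ℕ) = if (j:ℕ) < m+1 then (if (j:ℕ) % 2 = (m+1) % 2 then -1 else 0)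
          else if (j:ℕ) = m+1 then 1/2 else (-1:ℝ)^(m+3)/2 := by
        unfold Hinvf
        rw [if_neg (by omega), h2]
        by_cases hj : (j:ℕ) < m+1
        · rw [if_pos hj, if_pos hj]
        · rw [if_neg hj, if_neg hj]
          by_cases hj2 : (j:ℕ) = m+1
          · rw [if_pos hj2, if_pos hj2]
          · rw [if_neg hj2, if_neg hj2, if_pos (by omega)]
      have hb2 : Hinvf (m+3) (m+2) (j:ℕ) = if (j:ℕ) < m+1 then (if (j:ℕ) % 2 = (m+2) % 2 then -1 else 0)
          else if (j:ℕ) = m+1 then 1/2 else -((-1:ℝ)^(m+3)/2) := by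
        unfold Hinvf
        rw [if_neg (by omega), h2]
        by_cases hj : (j:ℕ) < m+1
        · rw [if_pos hj, if_pos hj]
        · rw [if_neg hj, if_neg hj]
          by_cases hj2 : (j:ℕ) = m+1
          · rw [if_pos hj2, if_pos hj2]
          · rw [if_neg hj2, if_neg hj2, if_neg (by omega)]
      rw [hb1, hb2]
      by_cases hj : (j:ℕ) < m+1
      · rw [if_pos hj, if_pos hj, if_pos (Finset.mem_range.mpr hj), if_neg (by omega : ¬ i = j)]
        rcases (by omega : (j:ℕ) % 2 = (m+1) % 2 ∨ (j:ℕ) % 2 = (m+2) % 2) with hp | hp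
        · rw [if_pos hp, if_neg (by omega), negone_pow_congr hp]; ring
        · rw [if_neg (by omega), if_pos hp, negone_pow_congr hp]; ring
      · rw [if_neg hj, if_neg hj, if_neg (by simpa using hj)]
        by_cases hj2 : (j:ℕ) = m+1
        · rw [if_pos hj2, if_pos hj2, if_neg (by intro h; omega : ¬ i = j)]
          rw [show m+2 = (m+1)+1 from rfl, pow_succ]
          ring
        · rw [if_neg hj2, if_neg hj2, if_pos (by exact Fin.ext (by omega) : i = j)]
          have hsq : ((-1:ℝ)^m)^2 = 1 := by
            rcases Nat.even_or_odd m with he | ho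
            · rw [he.neg_one_pow]; norm_num
            · rw [ho.neg_one_pow]; norm_num
          simp only [pow_succ, pow_add]
          nlinarith [hsq]
    · -- identity row
      have e : ∀ k : Fin (m+3), H (m+3) i k * Hinvf (m+3) (k:ℕ) (j:ℕ)
          = if k = i then Hinvf (m+3) (i:ℕ) (j:ℕ) else 0 := by
        intro k
        unfold H
        simp only [Matrix.of_apply]
        rw [if_neg (by omega : ¬ (i:ℕ) = m + 3 - 2), if_neg (by omega : ¬ (i:ℕ) = m + 3 - 1)]
        by_cases hik : i = k
        · rw [if_pos hik, if_pos hik.symm, one_mul, hik]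
        · rw [if_neg hik, if_neg (fun h => hik h.symm), zero_mul]
      rw [Finset.sum_congr rfl (fun k _ => e k),
        Finset.sum_ite_eq' Finset.univ i (fun _ => Hinvf (m+3) (i:ℕ) (j:ℕ)),
        if_pos (Finset.mem_univ i)]
      unfold Hinvf
      rw [if_pos (by omega)]
      by_cases hij : i = j
      · rw [if_pos (by rw [hij] : (j:ℕ) = (i:ℕ)), if_pos hij]
      · rw [if_neg (fun h => hij (Fin.ext h.symm)), if_neg hij]

lemma isUnit_H {n : ℕ} (hn : 3 ≤ n) : IsUnit (H n) := by
  rw [Matrix.isUnit_iff_isUnit_det]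
  exact Matrix.isUnit_det_of_right_inverse (H_mul_Hinv hn)


lemma G_eq_s12 {n : ℕ} (hn : 3 ≤ n) :
    (H n)⁻¹ * (S0 n)⁻¹ * (S1 n)⁻¹ * D2 n
      = Matrix.of fun i j : Fin n => Gf n (i:ℕ) (j:ℕ) := by
  have hH := (Matrix.isUnit_iff_isUnit_det _).mp (isUnit_H hn)
  have h0 := (Matrix.isUnit_iff_isUnit_det _).mp (isUnit_S0 n)
  have h1 := (Matrix.isUnit_iff_isUnit_det _).mp (isUnit_S1 n)
  rw [← main_id hn]
  simp only [Matrix.mul_assoc]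
  rw [Matrix.nonsing_inv_mul_cancel_left _ _ h1,
    Matrix.nonsing_inv_mul_cancel_left _ _ h0,
    Matrix.nonsing_inv_mul_cancel_left _ _ hH]

lemma nat_sq_nonneg (j : ℕ) : (0:ℝ) ≤ (j:ℝ)^2 * ((j:ℝ)^2 - 1) := by
  rcases Nat.eq_zero_or_pos j with h0 | h1
  · subst h0; norm_num
  · have h2 : (1:ℝ) ≤ (j:ℝ) := by exact_mod_cast h1
    have h3 : (1:ℝ) ≤ (j:ℝ)^2 := by nlinarith
    exact mul_nonneg (sq_nonneg _) (by linarith)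

/-- absolute column sums of Gf -/
lemma Gf_colabs {n : ℕ} (hn : 3 ≤ n) (j : ℕ) (hj : j < n) :
    ∑ k ∈ range n, |Gf n k j| = 2/3 * ((j:ℝ)^2 * ((j:ℝ)^2 - 1)) := by
  obtain ⟨m, rfl⟩ : ∃ m, n = m + 3 := ⟨n - 3, by omega⟩
  rw [show range (m+3) = range ((m+1)+1+1) from rfl, Finset.sum_range_succ, Finset.sum_range_succ]
  have e1 : ∑ k ∈ range (m+1), |Gf (m+3) k j| = ∑ k ∈ range (m+1), gf k j := by
    refine Finset.sum_congr rfl (fun k hk => ?_)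
    simp only [Finset.mem_range] at hk
    unfold Gf; rw [if_neg (by omega)]
    exact abs_of_nonneg (gf_nonneg k j)
  rw [e1, colsum_range j (m+1) (by omega)]
  have b1 : Gf (m+3) (m+1) j = if j % 2 = (m+1) % 2 then botf j else 0 := by
    unfold Gf; rw [if_pos (by omega)]
  have b2 : Gf (m+3) (m+2) j = if j % 2 = (m+2) % 2 then botf j else 0 := by
    unfold Gf; rw [if_pos (by omega)]
  have habs : |botf j| = (j:ℝ)^2 * ((j:ℝ)^2 - 1) / 3 := by
    unfold botf
    rw [show -((j:ℝ)^2 * ((j:ℝ)^2 - 1)) / 3 = -((j:ℝ)^2 * ((j:ℝ)^2 - 1) / 3) from by ring,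
      abs_neg, abs_of_nonneg (by nlinarith [nat_sq_nonneg j])]
  rw [b1, b2]
  rcases (by omega : j % 2 = (m+1) % 2 ∨ j % 2 = (m+2) % 2) with hp | hp
  · rw [if_pos hp, if_neg (by omega), abs_zero, habs]; ring
  · rw [if_neg (by omega), if_pos hp, abs_zero, habs]; ring

lemma bound_mono {n : ℕ} (hn : 3 ≤ n) (j : ℕ) (hj : j < n) :
    2/3 * ((j:ℝ)^2 * ((j:ℝ)^2 - 1)) ≤ 2/3 * (n:ℝ) * ((n:ℝ) - 2) * ((n:ℝ) - 1)^2 := by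
  have hx : (j:ℝ) ≤ (n:ℝ) - 1 := by
    have : (j:ℝ) + 1 ≤ (n:ℝ) := by exact_mod_cast hj
    linarith
  have hx0 : (0:ℝ) ≤ (j:ℝ) := Nat.cast_nonneg j
  have hn3 : (3:ℝ) ≤ (n:ℝ) := by exact_mod_cast hn
  have hy2 : (4:ℝ) ≤ ((n:ℝ)-1)^2 := by nlinarith
  have hxy : (j:ℝ)^2 ≤ ((n:ℝ)-1)^2 := by nlinarith
  have key : (j:ℝ)^2 * ((j:ℝ)^2 - 1) ≤ ((n:ℝ)-1)^2 * (((n:ℝ)-1)^2 - 1) := by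
    nlinarith [mul_nonneg (sub_nonneg.mpr hxy) (by nlinarith [sq_nonneg ((j:ℝ))] : (0:ℝ) ≤ ((n:ℝ)-1)^2 + (j:ℝ)^2 - 1)]
  nlinarith [key]

/-- For every `n ≥ 3`, `H`, `S₀`, `S₁` are invertible and the spectral radius of
`G = H⁻¹ S₀⁻¹ S₁⁻¹ D₂` satisfies `ρ(G) ≤ (2/3) n (n-2) (n-1)²`, i.e. every complex
eigenvalue `μ` of `G` satisfies this modulus bound. -/
theorem stmt12 (n : ℕ) (hn : 3 ≤ n) :
    IsUnit (H n) ∧ IsUnit (S0 n) ∧ IsUnit (S1 n) ∧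
      ∀ μ ∈ spectrum ℂ (((H n)⁻¹ * (S0 n)⁻¹ * (S1 n)⁻¹ * D2 n).map Complex.ofReal),
        ‖μ‖ ≤ 2 / 3 * (n : ℝ) * ((n : ℝ) - 2) * ((n : ℝ) - 1) ^ 2 := by
  refine ⟨isUnit_H hn, isUnit_S0 n, isUnit_S1 n, ?_⟩
  intro μ hμ
  rw [G_eq_s12 hn] at hμ
  set C : ℝ := 2 / 3 * (n : ℝ) * ((n : ℝ) - 2) * ((n : ℝ) - 1) ^ 2 with hC
  set M : Matrix (Fin n) (Fin n) ℂ :=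
    (Matrix.of fun i j : Fin n => Gf n (i:ℕ) (j:ℕ)).map Complex.ofReal with hM
  have hdet : (algebraMap ℂ (Matrix (Fin n) (Fin n) ℂ) μ - M).det = 0 := by
    by_contra hne
    exact (spectrum.mem_iff.mp hμ)
      ((Matrix.isUnit_iff_isUnit_det _).mpr (isUnit_iff_ne_zero.mpr hne))
  obtain ⟨v, hv0, hv⟩ := Matrix.exists_mulVec_eq_zero_iff.mpr hdet
  have heig : M.mulVec v = μ • v := by
    have e : (algebraMap ℂ (Matrix (Fin n) (Fin n) ℂ) μ - M).mulVec v
        = μ • v - M.mulVec v := by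
      rw [Matrix.sub_mulVec, Algebra.algebraMap_eq_smul_one, Matrix.smul_mulVec,
        Matrix.one_mulVec]
    rw [e] at hv
    exact (sub_eq_zero.mp hv).symm
  set S : ℝ := ∑ i : Fin n, ‖v i‖ with hS
  have hSpos : 0 < S := by
    obtain ⟨i0, hi0⟩ := Function.ne_iff.mp hv0
    refine Finset.sum_pos' (fun i _ => norm_nonneg _) ⟨i0, Finset.mem_univ i0, ?_⟩
    exact norm_pos_iff.mpr hi0
  have habs : ∀ j : Fin n, ∑ i : Fin n, ‖M i j‖ ≤ C := by
    intro j
    have e : ∀ i : Fin n, ‖M i j‖ = |Gf n (i:ℕ) (j:ℕ)| := by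
      intro i
      rw [hM, Matrix.map_apply, Complex.norm_real, Real.norm_eq_abs, Matrix.of_apply]
    rw [Finset.sum_congr rfl (fun i _ => e i),
      show (∑ i : Fin n, |Gf n (i:ℕ) (j:ℕ)|) = ∑ k ∈ range n, |Gf n k (j:ℕ)| from
        Fin.sum_univ_eq_sum_range (fun k => |Gf n k (j:ℕ)|) n,
      Gf_colabs hn (j:ℕ) j.isLt]
    exact bound_mono hn (j:ℕ) j.isLt
  have key : ‖μ‖ * S ≤ C * S := by
    calc ‖μ‖ * S = ∑ i : Fin n, ‖μ * v i‖ := by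
          rw [Finset.mul_sum]
          exact Finset.sum_congr rfl (fun i _ => (norm_mul μ (v i)).symm)
      _ = ∑ i : Fin n, ‖M.mulVec v i‖ := by
          refine Finset.sum_congr rfl (fun i _ => ?_)
          rw [heig, Pi.smul_apply, smul_eq_mul]
      _ ≤ ∑ i : Fin n, ∑ j : Fin n, ‖M i j * v j‖ := by
          refine Finset.sum_le_sum (fun i _ => ?_)
          rw [Matrix.mulVec, dotProduct]
          simpa using norm_sum_le Finset.univ (fun j => M i j * v j)
      _ = ∑ j : Fin n, ∑ i : Fin n, ‖M i j‖ * ‖v j‖ := by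
          rw [Finset.sum_comm]
          exact Finset.sum_congr rfl (fun j _ => Finset.sum_congr rfl
            (fun i _ => norm_mul (M i j) (v j)))
      _ = ∑ j : Fin n, (∑ i : Fin n, ‖M i j‖) * ‖v j‖ := by
          exact Finset.sum_congr rfl (fun j _ => (Finset.sum_mul _ _ _).symm)
      _ ≤ ∑ j : Fin n, C * ‖v j‖ := by
          refine Finset.sum_le_sum (fun j _ => ?_)
          exact mul_le_mul_of_nonneg_right (habs j) (norm_nonneg _)
      _ = C * S := by rw [hS, Finset.mul_sum]
  exact le_of_mul_le_mul_right key hSpos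
end

section
/- Let n > N ≥ 1 and r ≥ 1 be integers. Let S₍₁₎ be an (n−N)×n matrix, S₍₂₎ an (n−N)×N matrix, S₍₃₎ an N×n matrix, S₍₄₎ an N×N matrix, and for 0 ≤ j ≤ r−1 let L₍₁₎ʲ, L₍₂₎ʲ, L₍₃₎ʲ, L₍₄₎ʲ be matrices of the same respective dimensions. Assume the n×n matrix M obtained by stacking S₍₁₎ on top of S₍₃₎ is invertible. Let u ∈ ℝ^{n+N} and u⁰, …, u^{r−1} ∈ ℝ^{n+N} satisfy the block equation [S₍₁₎ S₍₂₎; S₍₃₎ S₍₄₎] u = Σ_{j=0}^{r−1} [L₍₁₎ʲ L₍₂₎ʲ; L₍₃₎ʲ L₍₄₎ʲ] uʲ, and let û ∈ ℝⁿ satisfy M û = Σ_{j=0}^{r−1} [L₍₁₎ʲ; L₍₃₎ʲ] uʲ(1:n), where uʲ(1:n) denotes the first n components of uʲ. If ε > 0 is such that the last N components of u and of each uʲ have ℓ∞ norm less than ε, then ‖u(1:n) − û‖ ≤ ‖M⁻¹‖ · (‖[S₍₂₎; S₍₄₎]‖ + Σ_{j=0}^{r−1} ‖[L₍₂₎ʲ;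 L₍₄₎ʲ]‖) · ε. -/
open Matrix

/-- The `ℓ∞` norm of a vector. -/
noncomputable def vecNorm {ι : Type*} [Fintype ι] (v : ι → ℝ) : ℝ :=
  ⨆ i, |v i|

/-!
Subtracting the Approach-2 equation from the Approach-1 equation leaves
`M (u(1:n) - û) = Σⱼ [L₂ʲ; L₄ʲ] uʲ(n+1:) - [S₂; S₄] u(n+1:)`, in which only the trailing
components occur; these are smaller than `ε`, so the right side has norm at most
`(‖[S₂; S₄]‖ + Σⱼ ‖[L₂ʲ; L₄ʲ]‖) ε`, and inverting `M` costs the factor `‖M⁻¹‖`.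
-/

theorem iSup_norm_eq_pi_norm {ι E : Type*} [Fintype ι] [SeminormedAddCommGroup E]
    (v : ι → E) : ⨆ i, ‖v i‖ = ‖v‖ :=
  le_antisymm (Real.iSup_le (norm_le_pi_norm v) (norm_nonneg v)) <|
    (pi_norm_le_iff_of_nonneg (Real.iSup_nonneg fun i => norm_nonneg (v i))).2 fun i =>
      le_ciSup (f := fun i => ‖v i‖) (Set.finite_range _).bddAbove i

theorem vecNorm_eq_norm {ι : Type*} [Fintype ι] (v : ι → ℝ) : vecNorm v = ‖v‖ :=
  iSup_norm_eq_pi_norm v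

theorem fromBlocks_mulVec_sumElim {R m₁ m₂ n₁ n₂ : Type*} [Semiring R] [Fintype n₁] [Fintype n₂]
    (A : Matrix m₁ n₁ R) (B : Matrix m₁ n₂ R) (C : Matrix m₂ n₁ R) (D : Matrix m₂ n₂ R)
    (x : n₁ → R) (y : n₂ → R) :
    fromBlocks A B C D *ᵥ Sum.elim x y = fromRows A C *ᵥ x + fromRows B D *ᵥ y := by
  rw [← fromCols_fromRows_eq_fromBlocks, fromCols_mulVec_sumElim]

theorem mulVec_sub_eq_of_sum_eq {R ι m n p : Type*} [Fintype n] [Fintype p] [Ring R]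
    {A : Matrix m n R} {B : Matrix m p R} {C : ι → Matrix m n R} {D : ι → Matrix m p R}
    {s : Finset ι} {x x' : n → R} {y : p → R} {a : ι → n → R} {b : ι → p → R}
    (hfull : A *ᵥ x + B *ᵥ y = ∑ j ∈ s, (C j *ᵥ a j + D j *ᵥ b j))
    (hred : A *ᵥ x' = ∑ j ∈ s, C j *ᵥ a j) :
    A *ᵥ (x - x') = ∑ j ∈ s, D j *ᵥ b j - B *ᵥ y := by
  rw [mulVec_sub, hred, eq_sub_of_add_eq hfull, Finset.sum_add_distrib]
  abel

section LinftyOpNorm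

attribute [local instance] Matrix.linftyOpNormedAddCommGroup

theorem matNorm_eq_linfty_opNorm {ι κ : Type*} [Fintype ι] [Fintype κ] (A : Matrix ι κ ℝ) :
    matNorm A = ‖A‖ := by
  change _ = ‖fun i => WithLp.toLp 1 (A i)‖
  rw [← iSup_norm_eq_pi_norm]
  simp [matNorm, PiLp.norm_eq_of_L1]

variable {R m n : Type*} [Fintype m] [Fintype n] [NormedCommRing R] [DecidableEq n]

theorem norm_le_inv_mul_norm_mulVec {A : Matrix m n R} (e : m ≃ n)
    (hA : IsUnit (A.submatrix e.symm id)) (x : n → R) :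
    ‖x‖ ≤ ‖(A.submatrix e.symm id)⁻¹‖ * ‖A *ᵥ x‖ := by
  set M := A.submatrix e.symm id
  have hMx : M *ᵥ x = (A *ᵥ x) ∘ e.symm := rfl
  calc ‖x‖ = ‖M⁻¹ *ᵥ (M *ᵥ x)‖ := by
        rw [mulVec_mulVec, nonsing_inv_mul M ((isUnit_iff_isUnit_det M).mp hA), one_mulVec]
    _ ≤ ‖M⁻¹‖ * ‖M *ᵥ x‖ := linfty_opNorm_mulVec _ _
    _ = ‖M⁻¹‖ * ‖A *ᵥ x‖ := by rw [hMx, e.symm.surjective.pi_norm_comp]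

theorem norm_sum_mulVec_sub_mulVec_le {ι p : Type*} [Fintype p] {B : Matrix m p R}
    {D : ι → Matrix m p R} {s : Finset ι} {y : p → R} {b : ι → p → R} {ε : ℝ}
    (hy : ‖y‖ ≤ ε) (hb : ∀ j ∈ s, ‖b j‖ ≤ ε) :
    ‖∑ j ∈ s, D j *ᵥ b j - B *ᵥ y‖ ≤ (‖B‖ + ∑ j ∈ s, ‖D j‖) * ε := by
  have hmulVec (F : Matrix m p R) {z : p → R} (hz : ‖z‖ ≤ ε) :
      ‖F *ᵥ z‖ ≤ ‖F‖ * ε :=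
    (linfty_opNorm_mulVec F z).trans (mul_le_mul_of_nonneg_left hz (norm_nonneg F))
  calc ‖∑ j ∈ s, D j *ᵥ b j - B *ᵥ y‖
      ≤ ‖∑ j ∈ s, D j *ᵥ b j‖ + ‖B *ᵥ y‖ := norm_sub_le _ _
    _ ≤ ∑ j ∈ s, ‖D j *ᵥ b j‖ + ‖B *ᵥ y‖ := add_le_add_left (norm_sum_le _ _) _
    _ ≤ ∑ j ∈ s, ‖D j‖ * ε + ‖B‖ * ε :=
        add_le_add (Finset.sum_le_sum fun j hj => hmulVec _ (hb j hj)) (hmulVec _ hy)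
    _ = (‖B‖ + ∑ j ∈ s, ‖D j‖) * ε := by rw [add_mul, Finset.sum_mul, add_comm]

theorem norm_sub_le_of_mulVec_eq_sum {ι p : Type*} [Fintype p] {A : Matrix m n R}
    {B : Matrix m p R} {C : ι → Matrix m n R} {D : ι → Matrix m p R} {s : Finset ι}
    {x x' : n → R} {y : p → R} {a : ι → n → R} {b : ι → p → R} {ε : ℝ} (e : m ≃ n)
    (hA : IsUnit (A.submatrix e.symm id))
    (hfull : A *ᵥ x + B *ᵥ y = ∑ j ∈ s, (C j *ᵥ a j + D j *ᵥ b j))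
    (hred : A *ᵥ x' = ∑ j ∈ s, C j *ᵥ a j) (hy : ‖y‖ ≤ ε) (hb : ∀ j ∈ s, ‖b j‖ ≤ ε) :
    ‖x - x'‖ ≤ ‖(A.submatrix e.symm id)⁻¹‖ * (‖B‖ + ∑ j ∈ s, ‖D j‖) * ε := by
  rw [mul_assoc]
  calc ‖x - x'‖ ≤ ‖(A.submatrix e.symm id)⁻¹‖ * ‖A *ᵥ (x - x')‖ :=
        norm_le_inv_mul_norm_mulVec e hA _
    _ ≤ _ := by
        rw [mulVec_sub_eq_of_sum_eq hfull hred]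
        gcongr
        exact norm_sum_mulVec_sub_mulVec_le hy hb

end LinftyOpNorm

theorem stmt17_general (n N r : ℕ)
    (S1 : Matrix (Fin (n - N)) (Fin n) ℝ) (S2 : Matrix (Fin (n - N)) (Fin N) ℝ)
    (S3 : Matrix (Fin N) (Fin n) ℝ) (S4 : Matrix (Fin N) (Fin N) ℝ)
    (L1 : ℕ → Matrix (Fin (n - N)) (Fin n) ℝ) (L2 : ℕ → Matrix (Fin (n - N)) (Fin N) ℝ)
    (L3 : ℕ → Matrix (Fin N) (Fin n) ℝ) (L4 : ℕ → Matrix (Fin N) (Fin N) ℝ)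
    (u1 : Fin n → ℝ) (u2 : Fin N → ℝ)
    (v1 : ℕ → Fin n → ℝ) (v2 : ℕ → Fin N → ℝ)
    (uhat : Fin n → ℝ) (ε : ℝ)
    (e : (Fin (n - N) ⊕ Fin N) ≃ Fin n)
    (hMunit : IsUnit ((Matrix.fromRows S1 S3).submatrix e.symm id))
    (hblock : (Matrix.fromBlocks S1 S2 S3 S4) *ᵥ Sum.elim u1 u2
        = ∑ j ∈ Finset.range r,
            (Matrix.fromBlocks (L1 j) (L2 j) (L3 j) (L4 j)) *ᵥ Sum.elim (v1 j) (v2 j))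
    (hhat : (Matrix.fromRows S1 S3) *ᵥ uhat
        = ∑ j ∈ Finset.range r, (Matrix.fromRows (L1 j) (L3 j)) *ᵥ v1 j)
    (hu2 : vecNorm u2 < ε) (hv2 : ∀ j < r, vecNorm (v2 j) < ε) :
    vecNorm (u1 - uhat)
      ≤ matNorm (((Matrix.fromRows S1 S3).submatrix e.symm id)⁻¹)
        * (matNorm (Matrix.fromRows S2 S4)
            + ∑ j ∈ Finset.range r, matNorm (Matrix.fromRows (L2 j) (L4 j))) * ε := by
  simp only [fromBlocks_mulVec_sumElim] at hblock
  simp only [vecNorm_eq_norm] at hu2 hv2 ⊢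
  simp only [matNorm_eq_linfty_opNorm]
  exact norm_sub_le_of_mulVec_eq_sum e hMunit hblock hhat hu2.le
    fun j hj => (hv2 j (Finset.mem_range.mp hj)).le

/-- Comparison of Approach 1 and (uncorrected) Approach 2. A vector `u ∈ ℝ^{n+N}` is
encoded by its first `n` components `u1` and its last `N` components `u2` (and similarly
each previous-step solution `uʲ` by `v1 j` and `v2 j`). The `n×n` stacked matrix `M`
(`S₍₁₎` on top of `S₍₃₎`) is viewed as a square matrix via the canonical identification
`e : Fin (n-N) ⊕ Fin N ≃ Fin n`. If `u` satisfies the Approach-1 block equation, `û`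
satisfies the Approach-2 equation, `M` is invertible, and the trailing `N` components of
`u` and of each `uʲ` are `< ε` in `ℓ∞` norm, then
`‖u(1:n) − û‖ ≤ ‖M⁻¹‖ (‖[S₂; S₄]‖ + Σⱼ ‖[L₂ʲ; L₄ʲ]‖) ε`. -/
theorem stmt17 (n N r : ℕ) (hN : 1 ≤ N) (hNn : N < n) (hr : 1 ≤ r)
    (S1 : Matrix (Fin (n - N)) (Fin n) ℝ) (S2 : Matrix (Fin (n - N)) (Fin N) ℝ)
    (S3 : Matrix (Fin N) (Fin n) ℝ) (S4 : Matrix (Fin N) (Fin N) ℝ)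
    (L1 : ℕ → Matrix (Fin (n - N)) (Fin n) ℝ) (L2 : ℕ → Matrix (Fin (n - N)) (Fin N) ℝ)
    (L3 : ℕ → Matrix (Fin N) (Fin n) ℝ) (L4 : ℕ → Matrix (Fin N) (Fin N) ℝ)
    (u1 : Fin n → ℝ) (u2 : Fin N → ℝ)
    (v1 : ℕ → Fin n → ℝ) (v2 : ℕ → Fin N → ℝ)
    (uhat : Fin n → ℝ) (ε : ℝ) (hε : 0 < ε)
    (e : (Fin (n - N) ⊕ Fin N) ≃ Fin n)
    (he : e = finSumFinEquiv.trans (finCongr (Nat.sub_add_cancel hNn.le)))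
    (hMunit : IsUnit ((Matrix.fromRows S1 S3).submatrix e.symm id))
    (hblock : (Matrix.fromBlocks S1 S2 S3 S4) *ᵥ Sum.elim u1 u2
        = ∑ j ∈ Finset.range r,
            (Matrix.fromBlocks (L1 j) (L2 j) (L3 j) (L4 j)) *ᵥ Sum.elim (v1 j) (v2 j))
    (hhat : (Matrix.fromRows S1 S3) *ᵥ uhat
        = ∑ j ∈ Finset.range r, (Matrix.fromRows (L1 j) (L3 j)) *ᵥ v1 j)
    (hu2 : vecNorm u2 < ε) (hv2 : ∀ j < r, vecNorm (v2 j) < ε) :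
    vecNorm (u1 - uhat)
      ≤ matNorm (((Matrix.fromRows S1 S3).submatrix e.symm id)⁻¹)
        * (matNorm (Matrix.fromRows S2 S4)
            + ∑ j ∈ Finset.range r, matNorm (Matrix.fromRows (L2 j) (L4 j))) * ε :=
  stmt17_general n N r S1 S2 S3 S4 L1 L2 L3 L4 u1 u2 v1 v2 uhat ε e hMunit hblock hhat hu2 hv2
end

section
/- Let n, N, r ≥ 1 be integers with N ≤ n, let B be an N×n real matrix, c ∈ ℝ^N, and let α₀, …, α_r, β₀, …, β_r be real numbers with α_r ≠ 0 and Σ_{j=0}^{r} α_j = 0 (the consistency condition of a linear multistep method). Let M₀, …, M_r be n×n real matrices, let h > 0, let u⁰, …, u^{r−1} ∈ ℝⁿ satisfy B uʲ = c for each 0 ≤ j ≤ r−1, and suppose û ∈ ℝⁿ satisfies the multistep relation α_r û + Σ_{j=0}^{r−1} α_j uʲ = h (Σ_{j=0}^{r−1} β_j M_j uʲ + β_r M_r û). Then the boundary residual of û satisfies ‖B û − c‖ ≤ (h/|α_r|) · ‖B‖ · (Σ_{j=0}^{r−1} |β_j| ‖M_j‖ ‖uʲ‖ + |β_r| ‖M_r‖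 ‖û‖); in particular it is bounded by a constant times the step size h. -/
open Matrix

theorem multistep_map_sub_eq {R E F : Type*} [Ring R] [AddCommGroup E] [Module R E]
    [AddCommGroup F] [Module R F] (L : E →ₗ[R] F) {r : ℕ} {α : ℕ → R}
    (hconsist : ∑ j ∈ Finset.range (r + 1), α j = 0) {u : ℕ → E} {c : F}
    (hbc : ∀ j < r, L (u j) = c) {x y : E}
    (hstep : α r • x + ∑ j ∈ Finset.range r, α j • u j = y) :
    α r • (L x - c) = L y := by
  have hsum : ∑ j ∈ Finset.range r, α j = -α r := by
    rw [Finset.sum_range_succ] at hconsist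
    exact eq_neg_of_add_eq_zero_left hconsist
  have hconst : ∑ j ∈ Finset.range r, α j • L (u j) = -α r • c := by
    rw [Finset.sum_congr rfl fun j hj => by rw [hbc j (Finset.mem_range.mp hj)],
      ← Finset.sum_smul, hsum]
  simp only [← hstep, map_add, map_sum, map_smul, hconst, neg_smul, sub_eq_add_neg,
    smul_add, smul_neg]

section LinftyOpNorm

attribute [local instance] Matrix.linftyOpNormedAddCommGroup

theorem norm_smul_mulVec_le {m n : Type*} [Fintype m] [Fintype n] (b : ℝ)
    (A : Matrix m n ℝ) (x : n → ℝ) : ‖b • (A *ᵥ x)‖ ≤ |b| * ‖A‖ * ‖x‖ := by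
  rw [norm_smul, Real.norm_eq_abs, mul_assoc]
  exact mul_le_mul_of_nonneg_left (linfty_opNorm_mulVec A x) (abs_nonneg b)

theorem norm_multistep_rhs_le {m : Type*} [Fintype m] (r : ℕ) (β : ℕ → ℝ)
    (M : ℕ → Matrix m m ℝ) (u : ℕ → m → ℝ) (x : m → ℝ) :
    ‖∑ j ∈ Finset.range r, β j • (M j *ᵥ u j) + β r • (M r *ᵥ x)‖
      ≤ ∑ j ∈ Finset.range r, |β j| * ‖M j‖ * ‖u j‖ + |β r| * ‖M r‖ * ‖x‖ :=
  (norm_add_le _ _).trans <| add_le_add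
    ((norm_sum_le _ _).trans <| Finset.sum_le_sum fun _ _ => norm_smul_mulVec_le _ _ _)
    (norm_smul_mulVec_le _ _ _)

theorem stmt18_general (n N r : ℕ)
    (B : Matrix (Fin N) (Fin n) ℝ) (c : Fin N → ℝ)
    (α β : ℕ → ℝ) (hαr : α r ≠ 0) (hconsist : ∑ j ∈ Finset.range (r + 1), α j = 0)
    (M : ℕ → Matrix (Fin n) (Fin n) ℝ) (h : ℝ) (hh : 0 < h)
    (u : ℕ → Fin n → ℝ) (hbc : ∀ j < r, B *ᵥ u j = c)
    (uhat : Fin n → ℝ)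
    (hstep : α r • uhat + ∑ j ∈ Finset.range r, α j • u j
        = h • (∑ j ∈ Finset.range r, β j • ((M j) *ᵥ u j) + β r • ((M r) *ᵥ uhat))) :
    vecNorm (B *ᵥ uhat - c)
      ≤ h / |α r| * matNorm B
        * (∑ j ∈ Finset.range r, |β j| * matNorm (M j) * vecNorm (u j)
            + |β r| * matNorm (M r) * vecNorm uhat) := by
  simp only [vecNorm_eq_norm, matNorm_eq_linfty_opNorm]
  set w := ∑ j ∈ Finset.range r, β j • ((M j) *ᵥ u j) + β r • ((M r) *ᵥ uhat)
  have hres : α r • (B *ᵥ uhat - c) = h • (B *ᵥ w) := by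
    simpa [mulVec_smul] using multistep_map_sub_eq B.mulVecLin hconsist hbc hstep
  have hres_norm : |α r| * ‖B *ᵥ uhat - c‖ = h * ‖B *ᵥ w‖ := by
    simpa [norm_smul, abs_of_pos hh] using congrArg norm hres
  calc ‖B *ᵥ uhat - c‖ = h / |α r| * ‖B *ᵥ w‖ := by
        rw [div_mul_eq_mul_div, eq_div_iff (abs_pos.2 hαr).ne', mul_comm, hres_norm]
    _ ≤ h / |α r| * (‖B‖ * ‖w‖) := by gcongr; exact linfty_opNorm_mulVec B w
    _ ≤ _ := by rw [← mul_assoc]; gcongr; exact norm_multistep_rhs_le r β M u uhat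

/-- Boundary residual of the uncorrected Approach-2 solution after one step of an
`r`-step linear multistep method. If `α_r ≠ 0`, `Σ_{j=0}^{r} α_j = 0` (consistency),
`B uʲ = c` for the previous steps `0 ≤ j ≤ r-1`, and `û` satisfies the multistep relation
`α_r û + Σ_{j<r} α_j uʲ = h (Σ_{j<r} β_j M_j uʲ + β_r M_r û)`, then
`‖B û − c‖ ≤ (h/|α_r|) ‖B‖ (Σ_{j<r} |β_j| ‖M_j‖ ‖uʲ‖ + |β_r| ‖M_r‖ ‖û‖)`,
a bound proportional to the step size `h`. -/
theorem stmt18 (n N r : ℕ) (hn : 1 ≤ n) (hN : 1 ≤ N) (hNn : N ≤ n) (hr : 1 ≤ r)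
    (B : Matrix (Fin N) (Fin n) ℝ) (c : Fin N → ℝ)
    (α β : ℕ → ℝ) (hαr : α r ≠ 0) (hconsist : ∑ j ∈ Finset.range (r + 1), α j = 0)
    (M : ℕ → Matrix (Fin n) (Fin n) ℝ) (h : ℝ) (hh : 0 < h)
    (u : ℕ → Fin n → ℝ) (hbc : ∀ j < r, B *ᵥ u j = c)
    (uhat : Fin n → ℝ)
    (hstep : α r • uhat + ∑ j ∈ Finset.range r, α j • u j
        = h • (∑ j ∈ Finset.range r, β j • ((M j) *ᵥ u j) + β r • ((M r) *ᵥ uhat))) :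
    vecNorm (B *ᵥ uhat - c)
      ≤ h / |α r| * matNorm B
        * (∑ j ∈ Finset.range r, |β j| * matNorm (M j) * vecNorm (u j)
            + |β r| * matNorm (M r) * vecNorm uhat) :=
  stmt18_general n N r B c α β hαr hconsist M h hh u hbc uhat hstep

end LinftyOpNorm
end
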